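/- arXiv:2310.15953 — 5 statements merged into one kernel-verified Lean document; each statement's English description precedes it below -/
import Mathlib

section
/- Let Γ be a RAACH with defining graph (H,m) and s₀ ∈ R_∞. Define a new defining graph (H',m') with vertex set S' = (S ∖ {s₀}) ∪ {s', s''} (s', s'' fresh symbols), with m' = m on S ∖ {s₀} and m'(s') = m'(s'') = 2, whose edges are: all edges {s,t} of H with s,t ≠ s₀, and the pairs {s',t} and {s'',t} for every edge {s₀,t} of H (in particular there is no edge {s',s''}). Let Γ' be the RAACH with defining graph (H',m'). Then the associated pairs (H*,w) of Γ and ((H')*,w') of Γ' are isomorphic as edge-weighted graphs, and the Cayley graphs Cay(Γ,S) and Cay(Γ',S') are isomorphic as simple graphs. -/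
set_option linter.unusedVariables false

attribute [local instance] Classical.propDecidable

open scoped commutatorElement

/-- The Cayley graph of a group `G` with respect to a connecting set `T`
(assumed closed under inversion, e.g. a symmetrized generating set). -/
def cayley (G : Type*) [Group G] (T : Set G) : SimpleGraph G where
  Adj x y := x ≠ y ∧ (x⁻¹ * y ∈ T ∨ y⁻¹ * x ∈ T)
  symm := ⟨fun x y h => ⟨h.1.symm, h.2.symm⟩⟩
  loopless := ⟨fun x h => h.1 rfl⟩

/-- The defining relators of a Right Angled Artin-Coxeter Hybrid: `s ^ (m s) = 1` for every
generator `s` with finite order prescription `m s`, and commutators for edges of `H`. -/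
def raachRels {S : Type*} (H : SimpleGraph S) (m : S → ℕ∞) : Set (FreeGroup S) :=
  {r | ∃ (s : S) (k : ℕ), m s = (k : ℕ∞) ∧ r = FreeGroup.of s ^ k} ∪
  {r | ∃ s t : S, H.Adj s t ∧ r = ⁅FreeGroup.of s, FreeGroup.of t⁆}

/-- The Right Angled Artin-Coxeter Hybrid with defining graph `(H, m)`. -/
abbrev RAACH {S : Type*} (H : SimpleGraph S) (m : S → ℕ∞) : Type _ :=
  PresentedGroup (raachRels H m)

/-- The generator of a RAACH corresponding to `s : S`. -/
def raachGen {S : Type*} (H : SimpleGraph S) (m : S → ℕ∞) (s : S) : RAACH H m :=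
  PresentedGroup.of s

/-- The symmetrized generating set `S* = {s, s⁻¹ | s ∈ S}` inside the RAACH. -/
def Sstar {S : Type*} (H : SimpleGraph S) (m : S → ℕ∞) : Set (RAACH H m) :=
  {g | ∃ s : S, g = raachGen H m s ∨ g = (raachGen H m s)⁻¹}

/-- The Cayley graph `Cay(Γ, S)` of the RAACH `Γ` with defining graph `(H, m)`. -/
def cayRAACH {S : Type*} (H : SimpleGraph S) (m : S → ℕ∞) : SimpleGraph (RAACH H m) :=
  cayley (RAACH H m) (Sstar H m)

/-- The edge weight function of the associated pair `(H*, w)` of a RAACH: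
`w(s,t) = 1` if `s`, `t` commute and `t ∉ {s, s⁻¹}`; `w(s, s⁻¹) = 1` if `ord(s) = 4`;
`w(s, s⁻¹) = 2` if `ord(s) = 3`; and `w(s,t) = 0` otherwise. -/
noncomputable def apWeight {S : Type*} (H : SimpleGraph S) (m : S → ℕ∞)
    (s t : RAACH H m) : ℕ :=
  if Commute s t ∧ t ≠ s ∧ t ≠ s⁻¹ then 1
  else if t = s⁻¹ ∧ orderOf s = 4 then 1
  else if t = s⁻¹ ∧ orderOf s = 3 then 2
  else 0

/-- The vertex set of the new defining graph: `S \ {s₀}` together with two fresh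
symbols `s'`, `s''` (encoded by `Bool`). -/
def newVerts (S : Type*) (s₀ : S) : Type _ := {a : S // a ≠ s₀} ⊕ Bool

/-- The relation generating the edges of the new defining graph `H'`: old edges not meeting
`s₀`; every edge `{s₀, t}` of `H` gives the pairs `{s', t}`, `{s'', t}`; and (if `withEdge`)
the additional edge `{s', s''}`. -/
def newRel {S : Type*} (H : SimpleGraph S) (s₀ : S) (withEdge : Bool) :
    newVerts S s₀ → newVerts S s₀ → Prop
  | Sum.inl a, Sum.inl b => H.Adj a.1 b.1
  | Sum.inl _, Sum.inr _ => False
  | Sum.inr _, Sum.inl b => H.Adj s₀ b.1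
  | Sum.inr _, Sum.inr _ => withEdge = true

/-- The new defining graph `H'`. -/
def newGraph {S : Type*} (H : SimpleGraph S) (s₀ : S) (withEdge : Bool) :
    SimpleGraph (newVerts S s₀) :=
  SimpleGraph.fromRel (newRel H s₀ withEdge)

/-- The new order function `m'`: equal to `m` away from `s₀`, and `m'(s') = m'(s'') = 2`. -/
def newM {S : Type*} (m : S → ℕ∞) (s₀ : S) : newVerts S s₀ → ℕ∞ :=
  Sum.elim (fun a => m a.1) (fun _ => 2)

/-!
Let `α` be the automorphism of `Γ` inverting `s₀` and `β` the automorphism of `Γ'` swapping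
`s'` and `s''`; both are involutions, so `ℤ/2` acts through them and we get `Γ ⋊ ℤ/2` and
`Γ' ⋊ ℤ/2`. Sending `s₀ ↦ (s', β)` and fixing the other generators defines
`F : Γ →* Γ' ⋊ ℤ/2` (no relation involves `s₀` except commutations, as `m s₀ = ∞`), and
`s' ↦ (s₀, α)`, `s'' ↦ (s₀⁻¹, α)` defines `F' : Γ' →* Γ ⋊ ℤ/2` (note `(s₀, α)² = 1`).
Extending each by the identity on `ℤ/2`, the extension of one composed with the other is the
inclusion of the first factor, so the first coordinates `Φ` of `F` and `Ψ` of `F'` are inverse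
bijections `Γ ≃ Γ'`. As `Φ (g u) = Φ g * β^ε (Φ u)` and `α`, `β` permute the symmetrized
generating sets, `Φ` is an isomorphism of Cayley graphs; walking along a coset of `⟨s₀⟩` it
follows the alternating words in `s'`, `s''`. On generators `Φ` sends `s₀, s₀⁻¹` to `s', s''`
and fixes the rest, and weights match because `w(s₀, s₀⁻¹) = 0` (infinite order) while `s'`,
`s''` are non-commuting involutions.
-/

section Cayley

variable {G G' : Type*} [Group G] [Group G'] {T : Set G} {T' : Set G'}

theorem cayley_adj_map {e : G ≃ G'} (he : ∀ x, ∀ u ∈ T, (e x)⁻¹ * e (x * u) ∈ T') {x y : G}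
    (h : (cayley G T).Adj x y) : (cayley G' T').Adj (e x) (e y) := by
  obtain ⟨hxy, hmem | hmem⟩ := h
  · exact ⟨e.injective.ne hxy, .inl (by simpa using he x _ hmem)⟩
  · exact ⟨e.injective.ne hxy, .inr (by simpa using he y _ hmem)⟩

def cayleyIsoOfInvMulMem (e : G ≃ G') (he : ∀ x, ∀ u ∈ T, (e x)⁻¹ * e (x * u) ∈ T')
    (he' : ∀ y, ∀ v ∈ T', (e.symm y)⁻¹ * e.symm (y * v) ∈ T) : cayley G T ≃g cayley G' T' where
  toEquiv := e
  map_rel_iff' := ⟨fun h => by simpa using cayley_adj_map he' h, cayley_adj_map he⟩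

end Cayley

open Multiplicative

namespace SemidirectProduct

variable {N G : Type*} [Group N] [Group G] {φ : G →* MulAut N}

theorem commute_mk_inl {a n : N} {g : G} (hn : φ g n = n) (ha : Commute a n) :
    Commute (⟨a, g⟩ : N ⋊[φ] G) (inl n) := by
  ext <;> simp [mul_left, mul_right, hn, ha.eq]

theorem mk_sq_eq_one {a : N} {g : G} (hg : g * g = 1) (ha : φ g a = a⁻¹) :
    (⟨a, g⟩ : N ⋊[φ] G) ^ 2 = 1 := by
  ext <;> simp [pow_two, mul_left, mul_right, ha, hg]

theorem left_left_of_lift_comp_eq_inl {A : Type*} [Group A] {ψ : G →* MulAut A}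
    {F : A →* N ⋊[φ] G} {F' : N →* A ⋊[ψ] G}
    {h : ∀ g, F'.comp (φ g).toMonoidHom = (MulAut.conj (inr g)).toMonoidHom.comp F'}
    (hF : (lift F' inr h).comp F = inl) (a : A) : (F' (F a).left).left = a := by
  simpa [lift, mul_left] using congrArg left (DFunLike.congr_fun hF a)

end SemidirectProduct

theorem Multiplicative.eq_one_or_eq_ofAdd_one (e : Multiplicative (ZMod 2)) :
    e = 1 ∨ e = ofAdd 1 := by
  induction e using Multiplicative.rec with
  | ofAdd e => fin_cases e; exacts [Or.inl rfl, Or.inr rfl]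

theorem Multiplicative.ofAdd_one_mul_self : (ofAdd 1 * ofAdd 1 : Multiplicative (ZMod 2)) = 1 :=
  rfl

noncomputable def zmodTwoHom {G : Type*} [Group G] (a : G) (ha : a * a = 1) :
    Multiplicative (ZMod 2) →* G where
  toFun e := if e = 1 then 1 else a
  map_one' := if_pos rfl
  map_mul' x y := by
    rcases x.eq_one_or_eq_ofAdd_one with rfl | rfl <;>
      rcases y.eq_one_or_eq_ofAdd_one with rfl | rfl <;>
      simp [Multiplicative.ofAdd_one_mul_self, ha]

@[simp]
theorem zmodTwoHom_ofAdd_one {G : Type*} [Group G] (a : G) (ha : a * a = 1) :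
    zmodTwoHom a ha (ofAdd 1) = a := by
  simp [zmodTwoHom]

namespace RAACH

variable {S : Type*} {H : SimpleGraph S} {m : S → ℕ∞}

section Presentation

variable {G : Type*} [Group G]

theorem raachGen_pow_eq_one {s : S} {k : ℕ} (h : m s = k) : raachGen H m s ^ k = 1 :=
  PresentedGroup.one_of_mem (rels := raachRels H m) (.inl ⟨s, k, h, rfl⟩)

theorem commute_raachGen_of_adj {s t : S} (h : H.Adj s t) :
    Commute (raachGen H m s) (raachGen H m t) :=
  commutatorElement_eq_one_iff_commute.mp <|
    PresentedGroup.one_of_mem (rels := raachRels H m) (.inr ⟨s, t, h, rfl⟩)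

theorem raachGen_inv_of_eq_two {s : S} (h : m s = 2) : (raachGen H m s)⁻¹ = raachGen H m s :=
  inv_eq_of_mul_eq_one_right <| by rw [← pow_two]; exact raachGen_pow_eq_one h

def lift (f : S → G) (hpow : ∀ s (k : ℕ), m s = k → f s ^ k = 1)
    (hcomm : ∀ s t, H.Adj s t → Commute (f s) (f t)) : RAACH H m →* G :=
  PresentedGroup.toGroup (f := f) <| by
    rintro r (⟨s, k, hk, rfl⟩ | ⟨s, t, h, rfl⟩)
    · simpa using hpow s k hk
    · simpa [commutatorElement_eq_one_iff_commute] using hcomm s t h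

@[simp]
theorem lift_raachGen (f : S → G) (hpow : ∀ s (k : ℕ), m s = k → f s ^ k = 1)
    (hcomm : ∀ s t, H.Adj s t → Commute (f s) (f t)) (s : S) :
    lift f hpow hcomm (raachGen H m s) = f s :=
  PresentedGroup.toGroup.of _

theorem hom_ext {φ ψ : RAACH H m →* G} (h : ∀ s, φ (raachGen H m s) = ψ (raachGen H m s)) :
    φ = ψ :=
  PresentedGroup.ext h

end Presentation

section Involution

variable (f : S → RAACH H m) (hpow : ∀ s (k : ℕ), m s = k → f s ^ k = 1)
  (hcomm : ∀ s t, H.Adj s t → Commute (f s) (f t))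

theorem lift_comp_lift_eq_id (hf : ∀ s, lift f hpow hcomm (f s) = raachGen H m s) :
    (lift f hpow hcomm).comp (lift f hpow hcomm) = MonoidHom.id _ :=
  hom_ext fun s => by simp [hf]

variable (hf : ∀ s, lift f hpow hcomm (f s) = raachGen H m s)

noncomputable def involutiveAut : MulAut (RAACH H m) :=
  (lift f hpow hcomm).toMulEquiv _ (lift_comp_lift_eq_id f hpow hcomm hf)
    (lift_comp_lift_eq_id f hpow hcomm hf)

@[simp]
theorem involutiveAut_raachGen (s : S) : involutiveAut f hpow hcomm hf (raachGen H m s) = f s :=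
  lift_raachGen f hpow hcomm s

@[simp]
theorem involutiveAut_symm : (involutiveAut f hpow hcomm hf).symm = involutiveAut f hpow hcomm hf :=
  rfl

theorem involutiveAut_mul_self : involutiveAut f hpow hcomm hf * involutiveAut f hpow hcomm hf = 1 :=
  MulEquiv.ext fun g => DFunLike.congr_fun (lift_comp_lift_eq_id f hpow hcomm hf) g

end Involution

section Letters

variable (H m) in
def letter (p : S × Bool) : RAACH H m :=
  bif p.2 then raachGen H m p.1 else (raachGen H m p.1)⁻¹

theorem letter_inv (s : S) (a : Bool) : (letter H m (s, a))⁻¹ = letter H m (s, !a) := by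
  cases a <;> simp [letter]

theorem mem_Sstar_iff {g : RAACH H m} : g ∈ Sstar H m ↔ ∃ p, letter H m p = g := by
  constructor
  · rintro ⟨s, rfl | rfl⟩
    exacts [⟨(s, true), rfl⟩, ⟨(s, false), rfl⟩]
  · rintro ⟨⟨s, _ | _⟩, rfl⟩
    exacts [⟨s, .inr rfl⟩, ⟨s, .inl rfl⟩]

theorem raachGen_mem_Sstar (s : S) : raachGen H m s ∈ Sstar H m :=
  ⟨s, .inl rfl⟩

theorem letter_mem_Sstar (p : S × Bool) : letter H m p ∈ Sstar H m :=
  mem_Sstar_iff.mpr ⟨p, rfl⟩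

theorem inv_mem_Sstar {g : RAACH H m} (hg : g ∈ Sstar H m) : g⁻¹ ∈ Sstar H m := by
  obtain ⟨⟨s, a⟩, rfl⟩ := mem_Sstar_iff.mp hg
  rw [letter_inv]
  exact letter_mem_Sstar _

theorem map_mem_Sstar {f : RAACH H m →* RAACH H m}
    (hf : ∀ s, f (raachGen H m s) ∈ Sstar H m) {g : RAACH H m} (hg : g ∈ Sstar H m) :
    f g ∈ Sstar H m := by
  obtain ⟨⟨s, _ | _⟩, rfl⟩ := mem_Sstar_iff.mp hg
  · simpa [letter] using inv_mem_Sstar (hf s)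
  · exact hf s

variable (H m) in
noncomputable def generatorChar (s : S) : RAACH H m →* Multiplicative (ZMod (m s).toNat) :=
  lift (Pi.mulSingle s (ofAdd 1))
    (fun t k hk => by
      by_cases ht : t = s
      · subst ht
        obtain rfl : k = (m t).toNat := by simp [hk]
        simp [← ofAdd_nsmul]
      · simp [ht])
    (fun _ _ _ => Commute.all _ _)

theorem generatorChar_letter_of_ne {s t : S} (h : t ≠ s) (a : Bool) :
    generatorChar H m s (letter H m (t, a)) = 1 := by
  cases a <;> simp [letter, generatorChar, h]

theorem orderOf_generatorChar_letter (s : S) (a : Bool) :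
    orderOf (generatorChar H m s (letter H m (s, a))) = (m s).toNat := by
  cases a <;> simp [letter, generatorChar, orderOf_ofAdd_eq_addOrderOf, ZMod.addOrderOf_one]

theorem orderOf_letter (p : S × Bool) : orderOf (letter H m p) = (m p.1).toNat := by
  obtain ⟨s, a⟩ := p
  refine Nat.dvd_antisymm ?_ (orderOf_generatorChar_letter s a ▸ orderOf_map_dvd _ _)
  cases hs : m s with
  | top => simp
  | coe k =>
    refine orderOf_dvd_of_pow_eq_one ?_
    cases a <;> simpa [letter] using raachGen_pow_eq_one (H := H) hs

theorem letter_ne_letter {p q : S × Bool} (h : p.1 ≠ q.1) (hq : m q.1 ≠ 1) :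
    letter H m p ≠ letter H m q := by
  obtain ⟨t, b⟩ := q
  intro e
  have := orderOf_generatorChar_letter (H := H) (m := m) t b
  rw [← e, generatorChar_letter_of_ne h, orderOf_one, eq_comm,
    ENat.toNat_eq_iff one_ne_zero] at this
  exact hq this

end Letters

section Commutation

theorem not_commute_raachGen {s t : S} (hst : s ≠ t) (hadj : ¬ H.Adj s t) {G : Type*} [Group G]
    {a b : G} (ha : ∀ k : ℕ, m s = k → a ^ k = 1) (hb : ∀ k : ℕ, m t = k → b ^ k = 1)
    (hab : ¬ Commute a b) : ¬ Commute (raachGen H m s) (raachGen H m t) := by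
  let f : S → G := fun u => if u = s then a else if u = t then b else 1
  have hpow : ∀ u (k : ℕ), m u = k → f u ^ k = 1 := by
    intro u k hk
    by_cases hu : u = s
    · subst hu; simpa [f] using ha k hk
    by_cases hu' : u = t
    · subst hu'; simpa [f, hu] using hb k hk
    · simp [f, hu, hu']
  have hcomm : ∀ u v, H.Adj u v → Commute (f u) (f v) := by
    intro u v huv
    by_cases hu : u = s <;> by_cases hu' : u = t <;> by_cases hv : v = s <;>
      by_cases hv' : v = t <;> subst_vars <;> simp_all [f, H.adj_comm]
  exact fun h => hab (by simpa [f, hst.symm] using h.map (lift f hpow hcomm))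

open Equiv in
noncomputable def cyclePerm (n : ℕ∞) (i : Fin 4) : Perm (Fin 4) :=
  if n = 3 then swap i (i + 1) * swap (i + 1) (i + 2) else swap i (i + 1)

theorem cyclePerm_pow_eq_one {n : ℕ∞} (hn : n = 2 ∨ n = 3 ∨ n = 4 ∨ n = ⊤) (i : Fin 4) {k : ℕ}
    (hk : n = k) : cyclePerm n i ^ k = 1 := by
  rcases hn with rfl | rfl | rfl | rfl
  · obtain rfl : k = 2 := by exact_mod_cast hk.symm
    rw [cyclePerm, if_neg (by norm_num)]
    revert i; decide
  · obtain rfl : k = 3 := by exact_mod_cast hk.symm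
    rw [cyclePerm, if_pos rfl]
    revert i; decide
  · obtain rfl : k = 4 := by exact_mod_cast hk.symm
    rw [cyclePerm, if_neg (by norm_num)]
    revert i; decide
  · simp at hk

theorem not_commute_cyclePerm (n n' : ℕ∞) : ¬ Commute (cyclePerm n 0) (cyclePerm n' 1) := by
  unfold cyclePerm Commute SemiconjBy
  split_ifs <;> decide

theorem commute_raachGen_iff (hm : ∀ s, m s = 2 ∨ m s = 3 ∨ m s = 4 ∨ m s = ⊤) {s t : S} :
    Commute (raachGen H m s) (raachGen H m t) ↔ s = t ∨ H.Adj s t := by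
  refine ⟨fun h => ?_, ?_⟩
  · by_contra! hne
    exact not_commute_raachGen hne.1 hne.2 (fun _ => cyclePerm_pow_eq_one (hm s) 0)
      (fun _ => cyclePerm_pow_eq_one (hm t) 1) (not_commute_cyclePerm _ _) h
  · rintro (rfl | h)
    exacts [Commute.refl _, commute_raachGen_of_adj h]

theorem commute_letter_iff (hm : ∀ s, m s = 2 ∨ m s = 3 ∨ m s = 4 ∨ m s = ⊤) {p q : S × Bool} :
    Commute (letter H m p) (letter H m q) ↔ p.1 = q.1 ∨ H.Adj p.1 q.1 := by
  obtain ⟨s, _ | _⟩ := p <;> obtain ⟨t, _ | _⟩ := q <;> simp [letter, commute_raachGen_iff hm]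

theorem commute_letter_raachGen_of_adj {s t : S} (h : H.Adj s t) (b : Bool) :
    Commute (letter H m (s, b)) (raachGen H m t) := by
  cases b <;> simp [letter, commute_raachGen_of_adj h]

end Commutation

variable (H m) in
noncomputable def letterWeight (p q : S × Bool) : ℕ :=
  if p.1 = q.1 then
    (if p.2 = q.2 then 0 else if m p.1 = 4 then 1 else if m p.1 = 3 then 2 else 0)
  else if H.Adj p.1 q.1 then 1 else 0

theorem apWeight_letter (hm : ∀ s, m s = 2 ∨ m s = 3 ∨ m s = 4 ∨ m s = ⊤) (p q : S × Bool) :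
    apWeight H m (letter H m p) (letter H m q) = letterWeight H m p q := by
  obtain ⟨s, a⟩ := p
  obtain ⟨t, b⟩ := q
  by_cases hst : s = t
  · subst hst
    by_cases hab : a = b
    · subst hab
      set x := letter H m (s, a)
      have hord (n : ℕ) (hn : 2 < n) : ¬ (x = x⁻¹ ∧ orderOf x = n) := fun ⟨hx, hxn⟩ =>
        have : n ∣ 2 :=
          hxn ▸ orderOf_dvd_of_pow_eq_one (by rw [pow_two, ← eq_inv_iff_mul_eq_one, ← hx])
        absurd (Nat.le_of_dvd two_pos this) (by omega)
      simp [apWeight, letterWeight, hord 4 (by norm_num), hord 3 (by norm_num)]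
    · obtain rfl : b = !a := by cases a <;> cases b <;> simp_all
      rw [← letter_inv]
      simp [apWeight, letterWeight, orderOf_letter]
  · have hne : m s ≠ 1 := by rcases hm s with h | h | h | h <;> simp [h]
    have h1 : letter H m (t, b) ≠ letter H m (s, a) := letter_ne_letter (Ne.symm hst) hne
    have h2 : letter H m (t, b) ≠ (letter H m (s, a))⁻¹ := by
      rw [letter_inv]; exact letter_ne_letter (Ne.symm hst) hne
    simp [apWeight, letterWeight, h1, h2, hst, commute_letter_iff hm]

end RAACH

namespace newVerts

variable {S : Type*} {s₀ : S}

/- `newVerts` is not reducible, so a bare `Sum.inl a` is not seen as a term of `newVerts S s₀`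
when rewriting; these constructors have the right type. `fresh true` is `s'`, `fresh false` is
`s''`. -/

def old (a : {a : S // a ≠ s₀}) : newVerts S s₀ := Sum.inl a

def fresh (b : Bool) : newVerts S s₀ := Sum.inr b

def elim {α : Sort*} (f : {a : S // a ≠ s₀} → α) (g : Bool → α) : newVerts S s₀ → α :=
  Sum.elim f g

@[simp]
theorem elim_old {α : Sort*} (f : {a : S // a ≠ s₀} → α) (g : Bool → α) (a) :
    elim f g (old a) = f a := rfl

@[simp]
theorem elim_fresh {α : Sort*} (f : {a : S // a ≠ s₀} → α) (g : Bool → α) (b) :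
    elim f g (fresh b) = g b := rfl

@[elab_as_elim]
theorem induction {P : newVerts S s₀ → Prop} (old : ∀ a, P (old a)) (fresh : ∀ b, P (fresh b))
    (v : newVerts S s₀) : P v :=
  Sum.rec old fresh v

@[simp]
theorem old_inj {a b : {a : S // a ≠ s₀}} : old a = old b ↔ a = b :=
  Sum.inl_injective.eq_iff

@[simp]
theorem old_ne_fresh (a : {a : S // a ≠ s₀}) (b : Bool) : old a ≠ fresh b :=
  Sum.inl_ne_inr

@[simp]
theorem fresh_ne_old (a : {a : S // a ≠ s₀}) (b : Bool) : fresh b ≠ old a :=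
  Sum.inr_ne_inl

end newVerts

section NewGraph

open newVerts

variable {S : Type*} (H : SimpleGraph S) {s₀ : S}

@[simp]
theorem newGraph_adj_old_old (w : Bool) (a b : {a : S // a ≠ s₀}) :
    (newGraph H s₀ w).Adj (old a) (old b) ↔ H.Adj a b :=
  (SimpleGraph.fromRel_adj _ _ _).trans
    ⟨fun h => h.2.elim id fun h => h.symm,
      fun h => ⟨fun e => h.ne (congrArg Subtype.val (old_inj.mp e)), .inl h⟩⟩

@[simp]
theorem newGraph_adj_old_fresh (w : Bool) (a : {a : S // a ≠ s₀}) (b : Bool) :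
    (newGraph H s₀ w).Adj (old a) (fresh b) ↔ H.Adj s₀ a :=
  (SimpleGraph.fromRel_adj _ _ _).trans
    ⟨fun h => h.2.elim False.elim id, fun h => ⟨old_ne_fresh a b, .inr h⟩⟩

@[simp]
theorem newGraph_adj_fresh_old (w : Bool) (a : {a : S // a ≠ s₀}) (b : Bool) :
    (newGraph H s₀ w).Adj (fresh b) (old a) ↔ H.Adj s₀ a :=
  SimpleGraph.adj_comm _ _ _ |>.trans (newGraph_adj_old_fresh H w a b)

@[simp]
theorem newGraph_false_adj_fresh_fresh (b c : Bool) :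
    ¬ (newGraph H s₀ false).Adj (fresh b) (fresh c) :=
  fun h => by simpa [newRel, fresh] using ((SimpleGraph.fromRel_adj _ _ _).mp h).2

@[simp]
theorem newM_old (m : S → ℕ∞) (a : {a : S // a ≠ s₀}) : newM m s₀ (old a) = m a := rfl

theorem newM_mem {m : S → ℕ∞} (hm : ∀ s, m s = 2 ∨ m s = 3 ∨ m s = 4 ∨ m s = ⊤)
    (v : newVerts S s₀) :
    newM m s₀ v = 2 ∨ newM m s₀ v = 3 ∨ newM m s₀ v = 4 ∨ newM m s₀ v = ⊤ := by
  induction v using newVerts.induction with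
  | old a => exact hm a
  | fresh b => exact .inl rfl

end NewGraph

namespace RAACH

open SemidirectProduct newVerts

section Replacement

variable {S : Type*} (H : SimpleGraph S) (m : S → ℕ∞) (s₀ : S)

local notation "Γ'" => RAACH (newGraph H s₀ false) (newM m s₀)

local notation "ℤ₂" => Multiplicative (ZMod 2)

noncomputable def invertGenerator : MulAut (RAACH H m) :=
  involutiveAut (fun s => if s = s₀ then (raachGen H m s)⁻¹ else raachGen H m s)
    (fun s k hk => by split_ifs <;> simp [raachGen_pow_eq_one hk])
    (fun s t hst => by
      have := commute_raachGen_of_adj (m := m) hst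
      split_ifs <;> simp [this])
    (fun s => by split_ifs <;> simp [*])

@[simp]
theorem invertGenerator_raachGen_of_ne {s : S} (h : s ≠ s₀) :
    invertGenerator H m s₀ (raachGen H m s) = raachGen H m s := by
  simp [invertGenerator, h]

@[simp]
theorem invertGenerator_raachGen_self :
    invertGenerator H m s₀ (raachGen H m s₀) = (raachGen H m s₀)⁻¹ := by
  simp [invertGenerator]

@[simp]
theorem invertGenerator_letter (b : Bool) :
    invertGenerator H m s₀ (letter H m (s₀, b)) = letter H m (s₀, !b) := by
  cases b <;> simp [invertGenerator, letter]

noncomputable def invertAction : ℤ₂ →* MulAut (RAACH H m) :=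
  zmodTwoHom (invertGenerator H m s₀) (involutiveAut_mul_self ..)

@[simp]
theorem invertAction_ofAdd_one : invertAction H m s₀ (ofAdd 1) = invertGenerator H m s₀ :=
  zmodTwoHom_ofAdd_one ..

noncomputable def swapFresh : MulAut Γ' :=
  involutiveAut (elim (fun a => raachGen _ _ (old a)) (fun b => raachGen _ _ (fresh !b)))
    (fun v k hk => by
      induction v using newVerts.induction with
      | old a => exact raachGen_pow_eq_one hk
      | fresh b => exact raachGen_pow_eq_one (hk ▸ rfl))
    (fun v w hvw => by
      induction v using newVerts.induction <;> induction w using newVerts.induction <;>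
        simp at hvw ⊢ <;> exact commute_raachGen_of_adj (by simpa using hvw))
    (fun v => by induction v using newVerts.induction <;> simp)

@[simp]
theorem swapFresh_raachGen_old (a : {a : S // a ≠ s₀}) :
    swapFresh H m s₀ (raachGen _ _ (old a)) = raachGen _ _ (old a) := by
  simp [swapFresh]

@[simp]
theorem swapFresh_raachGen_fresh (b : Bool) :
    swapFresh H m s₀ (raachGen _ _ (fresh b)) = raachGen _ _ (fresh !b) := by
  simp [swapFresh]

@[simp]
theorem swapFresh_symm : (swapFresh H m s₀).symm = swapFresh H m s₀ :=
  involutiveAut_symm ..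

@[simp]
theorem raachGen_fresh_inv (b : Bool) : (raachGen _ _ (fresh b) : Γ')⁻¹ = raachGen _ _ (fresh b) :=
  raachGen_inv_of_eq_two rfl

noncomputable def swapAction : ℤ₂ →* MulAut Γ' :=
  zmodTwoHom (swapFresh H m s₀) (involutiveAut_mul_self ..)

@[simp]
theorem swapAction_ofAdd_one : swapAction H m s₀ (ofAdd 1) = swapFresh H m s₀ :=
  zmodTwoHom_ofAdd_one ..

variable {m s₀} in
noncomputable def forwardHom (hs₀ : m s₀ = ⊤) : RAACH H m →* Γ' ⋊[swapAction H m s₀] ℤ₂ :=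
  lift (fun s => if h : s = s₀ then ⟨raachGen _ _ (fresh true), ofAdd 1⟩
      else inl (raachGen _ _ (old ⟨s, h⟩)))
    (fun s k hk => by
      by_cases h : s = s₀
      · subst h; simp [hs₀] at hk
      · simp [h, ← map_pow, raachGen_pow_eq_one (show newM m s₀ (old ⟨s, h⟩) = k from hk)])
    (fun s t hst => by
      have key (t : S) (ht : t ≠ s₀) (hadj : H.Adj s₀ t) :
          Commute (⟨raachGen _ _ (fresh true), ofAdd 1⟩ : Γ' ⋊[swapAction H m s₀] ℤ₂)
            (inl (raachGen _ _ (old ⟨t, ht⟩))) :=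
        commute_mk_inl (by simp [swapFresh_raachGen_old])
          (commute_raachGen_of_adj (by simpa using hadj))
      by_cases hs : s = s₀ <;> by_cases ht : t = s₀ <;> subst_vars
      · exact absurd hst (H.loopless.irrefl _)
      · simpa [ht] using key t ht hst
      · simpa [hs] using (key s hs hst.symm).symm
      · simpa [hs, ht] using (commute_raachGen_of_adj (by simpa using hst)).map inl)

noncomputable def backwardHom : Γ' →* RAACH H m ⋊[invertAction H m s₀] ℤ₂ :=
  lift (elim (fun a => inl (raachGen H m a)) (fun b => ⟨letter H m (s₀, b), ofAdd 1⟩))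
    (fun v k hk => by
      induction v using newVerts.induction with
      | old a => simp [← map_pow, raachGen_pow_eq_one (show m a = k from hk)]
      | fresh b =>
        obtain rfl : k = 2 := by exact_mod_cast (show (2 : ℕ∞) = k from hk).symm
        exact mk_sq_eq_one Multiplicative.ofAdd_one_mul_self (by simp [letter_inv]))
    (fun v w hvw => by
      have key (a : {a : S // a ≠ s₀}) (b : Bool) (h : H.Adj s₀ a) :
          Commute (⟨letter H m (s₀, b), ofAdd 1⟩ : RAACH H m ⋊[invertAction H m s₀] ℤ₂)
            (inl (raachGen H m a)) :=
        commute_mk_inl (by simp [a.2]) (commute_letter_raachGen_of_adj h b)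
      induction v using newVerts.induction with
      | old a =>
        induction w using newVerts.induction with
        | old a' => simpa using (commute_raachGen_of_adj (by simpa using hvw)).map inl
        | fresh b => simpa using (key a b (by simpa using hvw)).symm
      | fresh b =>
        induction w using newVerts.induction with
        | old a => simpa using key a b (by simpa using hvw)
        | fresh b' => simp at hvw)

variable {H m s₀}

@[simp]
theorem forwardHom_raachGen_of_ne (hs₀ : m s₀ = ⊤) {s : S} (h : s ≠ s₀) :
    forwardHom H hs₀ (raachGen H m s) = inl (raachGen _ _ (old ⟨s, h⟩)) := by
  simp [forwardHom, h]

@[simp]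
theorem forwardHom_raachGen_self (hs₀ : m s₀ = ⊤) :
    forwardHom H hs₀ (raachGen H m s₀) = inl (raachGen _ _ (fresh true)) * inr (ofAdd 1) := by
  simp [forwardHom]

@[simp]
theorem backwardHom_raachGen_old (a : {a : S // a ≠ s₀}) :
    backwardHom H m s₀ (raachGen _ _ (old a)) = inl (raachGen H m a) := by
  simp [backwardHom]

@[simp]
theorem backwardHom_raachGen_fresh (b : Bool) :
    backwardHom H m s₀ (raachGen _ _ (fresh b)) = inl (letter H m (s₀, b)) * inr (ofAdd 1) := by
  simp [backwardHom]

variable (H) in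
noncomputable def forwardExt (hs₀ : m s₀ = ⊤) :
    RAACH H m ⋊[invertAction H m s₀] ℤ₂ →* Γ' ⋊[swapAction H m s₀] ℤ₂ :=
  SemidirectProduct.lift (forwardHom H hs₀) inr fun e => by
    rcases e.eq_one_or_eq_ofAdd_one with rfl | rfl
    · exact MonoidHom.ext fun x => by simp
    · refine hom_ext fun s => ?_
      by_cases hs : s = s₀
      · subst hs
        ext <;> simp
      · ext <;> simp [hs]

variable (H m s₀) in
noncomputable def backwardExt :
    Γ' ⋊[swapAction H m s₀] ℤ₂ →* RAACH H m ⋊[invertAction H m s₀] ℤ₂ :=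
  SemidirectProduct.lift (backwardHom H m s₀) inr fun e => by
    rcases e.eq_one_or_eq_ofAdd_one with rfl | rfl
    · exact MonoidHom.ext fun x => by simp
    · refine hom_ext fun v => ?_
      induction v using newVerts.induction with
      | old a => ext <;> simp [a.2]
      | fresh b => cases b <;> ext <;> simp [letter]

theorem backwardExt_comp_forwardHom (hs₀ : m s₀ = ⊤) :
    (backwardExt H m s₀).comp (forwardHom H hs₀) = inl := by
  refine hom_ext fun s => ?_
  by_cases hs : s = s₀
  · subst hs
    ext <;> simp [backwardExt, letter, CharTwo.add_self_eq_zero]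
  · ext <;> simp [backwardExt, hs]

theorem forwardExt_comp_backwardHom (hs₀ : m s₀ = ⊤) :
    (forwardExt H hs₀).comp (backwardHom H m s₀) = inl := by
  refine hom_ext fun v => ?_
  induction v using newVerts.induction with
  | old a => ext <;> simp [forwardExt, a.2]
  | fresh b => cases b <;> ext <;> simp [forwardExt, letter, CharTwo.add_self_eq_zero]

variable (H) in
noncomputable def cayleyEquiv (hs₀ : m s₀ = ⊤) : RAACH H m ≃ Γ' where
  toFun g := (forwardHom H hs₀ g).left
  invFun x := (backwardHom H m s₀ x).left
  left_inv := left_left_of_lift_comp_eq_inl (backwardExt_comp_forwardHom hs₀)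
  right_inv := left_left_of_lift_comp_eq_inl (forwardExt_comp_backwardHom hs₀)

variable (s₀) in
noncomputable def newLetter (p : S × Bool) : newVerts S s₀ × Bool :=
  if h : p.1 = s₀ then (fresh p.2, true) else (old ⟨p.1, h⟩, p.2)

theorem cayleyEquiv_letter (hs₀ : m s₀ = ⊤) (p : S × Bool) :
    cayleyEquiv H hs₀ (letter H m p) = letter _ _ (newLetter s₀ p) := by
  obtain ⟨s, a⟩ := p
  by_cases hs : s = s₀
  · subst hs
    cases a <;> simp [cayleyEquiv, newLetter, letter]
  · cases a <;> simp [cayleyEquiv, newLetter, letter, hs]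

theorem letterWeight_newLetter (hs₀ : m s₀ = ⊤) (p q : S × Bool) :
    letterWeight (newGraph H s₀ false) (newM m s₀) (newLetter s₀ p) (newLetter s₀ q) =
      letterWeight H m p q := by
  obtain ⟨s, a⟩ := p
  obtain ⟨t, b⟩ := q
  by_cases hs : s = s₀ <;> by_cases ht : t = s₀ <;> subst_vars
  · simp [newLetter, letterWeight, hs₀]
  · simp [newLetter, letterWeight, ht, Ne.symm ht]
  · simp [newLetter, letterWeight, hs, H.adj_comm]
  · simp [newLetter, letterWeight, hs, ht]

theorem cayleyEquiv_mem_Sstar_iff (hs₀ : m s₀ = ⊤) {g : RAACH H m} :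
    cayleyEquiv H hs₀ g ∈ Sstar _ _ ↔ g ∈ Sstar H m := by
  refine ⟨fun hg => ?_, fun hg => ?_⟩
  · obtain ⟨⟨v, b⟩, hv⟩ := mem_Sstar_iff.mp hg
    have : ∃ p, letter (newGraph H s₀ false) (newM m s₀) (newLetter s₀ p) =
        letter (newGraph H s₀ false) (newM m s₀) (v, b) := by
      induction v using newVerts.induction with
      | old a => exact ⟨(a, b), by simp [newLetter, a.2]⟩
      | fresh c => exact ⟨(s₀, c), by cases b <;> simp [newLetter, letter]⟩
    obtain ⟨p, hp⟩ := this
    rw [← hp, ← cayleyEquiv_letter hs₀] at hv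
    exact (cayleyEquiv H hs₀).injective hv ▸ letter_mem_Sstar p
  · obtain ⟨p, rfl⟩ := mem_Sstar_iff.mp hg
    rw [cayleyEquiv_letter]
    exact letter_mem_Sstar _

theorem swapAction_mem_Sstar (e : ℤ₂) {x : Γ'} (hx : x ∈ Sstar _ _) :
    swapAction H m s₀ e x ∈ Sstar _ _ := by
  rcases e.eq_one_or_eq_ofAdd_one with rfl | rfl
  · simpa using hx
  · refine map_mem_Sstar (f := (swapFresh H m s₀).toMonoidHom) (fun v => ?_) hx
    induction v using newVerts.induction <;> simp [raachGen_mem_Sstar]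

theorem invertAction_mem_Sstar (e : ℤ₂) {g : RAACH H m} (hg : g ∈ Sstar H m) :
    invertAction H m s₀ e g ∈ Sstar H m := by
  rcases e.eq_one_or_eq_ofAdd_one with rfl | rfl
  · simpa using hg
  · refine map_mem_Sstar (f := (invertGenerator H m s₀).toMonoidHom) (fun s => ?_) hg
    by_cases hs : s = s₀
    · subst hs; simpa using inv_mem_Sstar (raachGen_mem_Sstar s)
    · simpa [hs] using raachGen_mem_Sstar s

theorem cayleyEquiv_inv_mul_mem_Sstar (hs₀ : m s₀ = ⊤) (g : RAACH H m) {u : RAACH H m}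
    (hu : u ∈ Sstar H m) : (cayleyEquiv H hs₀ g)⁻¹ * cayleyEquiv H hs₀ (g * u) ∈ Sstar _ _ := by
  simpa [cayleyEquiv, mul_left] using
    swapAction_mem_Sstar _ ((cayleyEquiv_mem_Sstar_iff hs₀).mpr hu)

theorem cayleyEquiv_symm_inv_mul_mem_Sstar (hs₀ : m s₀ = ⊤) (x : Γ') {v : Γ'}
    (hv : v ∈ Sstar _ _) :
    ((cayleyEquiv H hs₀).symm x)⁻¹ * (cayleyEquiv H hs₀).symm (x * v) ∈ Sstar H m := by
  have := (cayleyEquiv_mem_Sstar_iff hs₀ (g := (cayleyEquiv H hs₀).symm v)).mp (by simpa using hv)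
  simpa [cayleyEquiv, mul_left] using invertAction_mem_Sstar _ this

theorem apWeight_cayleyEquiv (hm : ∀ s, m s = 2 ∨ m s = 3 ∨ m s = 4 ∨ m s = ⊤)
    (hs₀ : m s₀ = ⊤) {u v : RAACH H m} (hu : u ∈ Sstar H m) (hv : v ∈ Sstar H m) :
    apWeight _ _ (cayleyEquiv H hs₀ u) (cayleyEquiv H hs₀ v) = apWeight H m u v := by
  obtain ⟨p, rfl⟩ := mem_Sstar_iff.mp hu
  obtain ⟨q, rfl⟩ := mem_Sstar_iff.mp hv
  rw [cayleyEquiv_letter, cayleyEquiv_letter, apWeight_letter (newM_mem hm), apWeight_letter hm,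
    letterWeight_newLetter hs₀]

end Replacement

end RAACH

open RAACH

theorem replace_Rinf_generator_general {S : Type} (H : SimpleGraph S) (m : S → ℕ∞)
    (hm : ∀ s, m s = 2 ∨ m s = 3 ∨ m s = 4 ∨ m s = (⊤ : ℕ∞))
    (s₀ : S) (hs₀ : m s₀ = (⊤ : ℕ∞)) :
    (∃ φ : (Sstar H m) ≃ (Sstar (newGraph H s₀ false) (newM m s₀)),
        ∀ s t : Sstar H m,
          apWeight (newGraph H s₀ false) (newM m s₀) (φ s).1 (φ t).1 =
            apWeight H m s.1 t.1) ∧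
      Nonempty (cayRAACH H m ≃g cayRAACH (newGraph H s₀ false) (newM m s₀)) :=
  ⟨⟨(cayleyEquiv H hs₀).subtypeEquiv fun _ => (cayleyEquiv_mem_Sstar_iff hs₀).symm,
      fun u v => apWeight_cayleyEquiv hm hs₀ u.2 v.2⟩,
    ⟨cayleyIsoOfInvMulMem (cayleyEquiv H hs₀) (fun g _ => cayleyEquiv_inv_mul_mem_Sstar hs₀ g)
      (fun x _ => cayleyEquiv_symm_inv_mul_mem_Sstar hs₀ x)⟩⟩

/-- **Replacing an infinite-order generator by two non-commuting involutions.** The associated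
pairs and the Cayley graphs of `Γ` and `Γ'` are isomorphic (weights being preserved). -/
theorem replace_Rinf_generator {S : Type} [Fintype S] (H : SimpleGraph S) (m : S → ℕ∞)
    (hm : ∀ s, m s = 2 ∨ m s = 3 ∨ m s = 4 ∨ m s = (⊤ : ℕ∞))
    (s₀ : S) (hs₀ : m s₀ = (⊤ : ℕ∞)) :
    (∃ φ : (Sstar H m) ≃ (Sstar (newGraph H s₀ false) (newM m s₀)),
        ∀ s t : Sstar H m,
          apWeight (newGraph H s₀ false) (newM m s₀) (φ s).1 (φ t).1 =
            apWeight H m s.1 t.1) ∧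
      Nonempty (cayRAACH H m ≃g cayRAACH (newGraph H s₀ false) (newM m s₀)) :=
  replace_Rinf_generator_general H m hm s₀ hs₀
end

section
/- Let G = (V,E) be a connected locally finite simple graph with adjacent vertices x, y, and let ℓ, n ≥ 0. Suppose there are pairwise distinct vertices x₁,…,x_ℓ, u₁,…,u_n, y₁,…,y_ℓ, v₁,…,v_n, all distinct from x and y, such that the neighbours of x are exactly {y, x₁,…,x_ℓ, u₁,…,u_n} and the neighbours of y are exactly {x, y₁,…,y_ℓ, v₁,…,v_n}. Assume (i) d(xᵢ, yⱼ) = 3 for all i,j ∈ {1,…,ℓ}; (ii) d(xᵢ, vⱼ) = 3 and d(yᵢ, uⱼ) = 3 for all i ∈ {1,…,ℓ}, j ∈ {1,…,n}; (iii) uⱼ ∼ vⱼ for all j ∈ {1,…,n}. Then the Lin–Lu–Yau Ollivier Ricci curvature of the edge {x,y} with respect to the normalized Laplacian satisfies κ_LLY(x,y) = (2 − 2ℓ)/(n + ℓ + 1). -/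
/-!
Pair the neighbours of `x` with those of `y`: `y` with `x`, `xᵢ` with `yᵢ`, `uⱼ` with `vⱼ`. For `f` with
`f y - f x = 1` this gives `(n + ℓ + 1) (Δf(x) - Δf(y)) = 2 + ∑ᵢ (f xᵢ - f yᵢ + 1) + ∑ⱼ (f uⱼ - f vⱼ + 1)`,
and for 1-Lipschitz `f` the terms are at least `-2` and `0` because `d(xᵢ, yᵢ) = 3` and `d(uⱼ, vⱼ) = 1`.
All these bounds are attained by the McShane extension of the values `0` at `x` and the `uⱼ` and `-1`
at the `xᵢ`, which by the distance hypotheses is at least `1`, `2`, `1` at `y`, `yᵢ`, `vⱼ`.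
-/

set_option linter.unusedVariables false

attribute [local instance] Classical.propDecidable

/-- The normalized Laplacian of a (locally finite) graph. -/
noncomputable def nlap {V : Type*} (G : SimpleGraph V) (f : V → ℝ) (x : V) : ℝ :=
  ((Nat.card (G.neighborSet x) : ℝ))⁻¹ * ∑ᶠ y, if G.Adj x y then f y - f x else 0

/-- `f` is 1-Lipschitz with respect to the graph distance of `G`. -/
def GLip {V : Type*} (G : SimpleGraph V) (f : V → ℝ) : Prop :=
  ∀ u v, |f u - f v| ≤ (G.dist u v : ℝ)

/-- The Lin-Lu-Yau Ollivier Ricci curvature of the edge `{x, y}` with respect to the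
normalized Laplacian, in the limit-free formulation of Münch-Wojciechowski. -/
noncomputable def kappaLLY {V : Type*} (G : SimpleGraph V) (x y : V) : ℝ :=
  sInf {r : ℝ | ∃ f : V → ℝ, GLip G f ∧ f y - f x = 1 ∧ r = nlap G f x - nlap G f y}

open Function Set

theorem GLip.sub_le_dist {V : Type*} {G : SimpleGraph V} {f : V → ℝ} (hf : GLip G f) (u v : V) :
    f u - f v ≤ G.dist u v :=
  le_of_abs_le (hf u v)

theorem kappaLLY_eq_of_le_of_exists {V : Type*} {G : SimpleGraph V} {x y : V} {r : ℝ}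
    (hle : ∀ f, GLip G f → f y - f x = 1 → r ≤ nlap G f x - nlap G f y)
    (hex : ∃ f, GLip G f ∧ f y - f x = 1 ∧ nlap G f x - nlap G f y = r) :
    kappaLLY G x y = r := by
  obtain ⟨f, hf, h1, hr⟩ := hex
  refine IsLeast.csInf_eq ⟨⟨f, hf, h1, hr.symm⟩, ?_⟩
  rintro _ ⟨g, hg, hg1, rfl⟩
  exact hle g hg hg1

theorem nlap_eq_of_neighborSet_eq_range {V ι : Type*} [Fintype ι] {G : SimpleGraph V} {a : V}
    {p : ι → V} (hp : Injective p) (hN : G.neighborSet a = range p) (f : V → ℝ) :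
    nlap G f a = (Fintype.card ι : ℝ)⁻¹ * ∑ k, (f (p k) - f a) := by
  have hsum : (∑ᶠ w, if G.Adj a w then f w - f a else 0) = ∑ᶠ w ∈ G.neighborSet a, (f w - f a) := by
    rw [finsum_mem_def]
    simp only [indicator_apply, SimpleGraph.mem_neighborSet]
  rw [nlap, hsum, hN, finsum_mem_range hp, finsum_eq_sum_of_fintype, Nat.card_range_of_injective hp,
    Nat.card_eq_fintype_card]

theorem nlap_sub_nlap_eq_sum {V ι : Type*} [Fintype ι] {G : SimpleGraph V} {x y : V}
    {px py : ι → V} (hpx : Injective px) (hpy : Injective py)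
    (hNx : G.neighborSet x = range px) (hNy : G.neighborSet y = range py) (f : V → ℝ) :
    nlap G f x - nlap G f y = (Fintype.card ι : ℝ)⁻¹ * ∑ k, (f (px k) - f (py k) + (f y - f x)) := by
  rw [nlap_eq_of_neighborSet_eq_range hpx hNx, nlap_eq_of_neighborSet_eq_range hpy hNy, ← mul_sub,
    ← Finset.sum_sub_distrib]
  congr 1
  exact Finset.sum_congr rfl fun k _ => by ring

theorem Option.elim'_injective {α β : Type*} {b : β} {g : α → β} (hg : Injective g)
    (hb : ∀ a, g a ≠ b) : Injective (Option.elim' b g) := by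
  rintro (_ | a) (_ | a') h
  · rfl
  · exact absurd h.symm (hb a')
  · exact absurd h (hb a)
  · exact congrArg some (hg h)

theorem range_option_elim'_sum_elim {α β γ : Type*} (b : γ) (f : α → γ) (g : β → γ) :
    range (Option.elim' b (Sum.elim f g)) = {b} ∪ range f ∪ range g := by
  rw [union_assoc, ← Sum.elim_range, singleton_union]
  ext w
  simp [Option.exists, eq_comm]

noncomputable def mcShaneExtension {V ι : Type*} [Fintype ι] [Nonempty ι] (G : SimpleGraph V)
    (p : ι → V) (c : ι → ℝ) (w : V) : ℝ :=
  Finset.univ.inf' Finset.univ_nonempty fun t => c t + G.dist w (p t)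

section McShane

variable {V ι : Type*} [Fintype ι] [Nonempty ι] {G : SimpleGraph V} {p : ι → V} {c : ι → ℝ}

theorem mcShaneExtension_le (w : V) (t : ι) : mcShaneExtension G p c w ≤ c t + G.dist w (p t) :=
  Finset.inf'_le _ (Finset.mem_univ t)

theorem le_mcShaneExtension_iff {w : V} {r : ℝ} :
    r ≤ mcShaneExtension G p c w ↔ ∀ t, r ≤ c t + G.dist w (p t) := by
  simp [mcShaneExtension, Finset.le_inf'_iff]

theorem glip_mcShaneExtension (hconn : G.Connected) : GLip G (mcShaneExtension G p c) := by
  have key : ∀ u v, mcShaneExtension G p c u - mcShaneExtension G p c v ≤ G.dist u v := by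
    intro u v
    obtain ⟨t, -, ht⟩ :=
      Finset.exists_mem_eq_inf' Finset.univ_nonempty fun t => c t + (G.dist v (p t) : ℝ)
    have htri : (G.dist u (p t) : ℝ) ≤ G.dist u v + G.dist v (p t) := by
      exact_mod_cast hconn.dist_triangle
    have hv : mcShaneExtension G p c v = c t + G.dist v (p t) := ht
    linarith [mcShaneExtension_le (G := G) (p := p) (c := c) u t]
  exact fun u v => abs_sub_le_iff.2 ⟨key u v, G.dist_comm ▸ key v u⟩

end McShane

section LocalStructure

variable {V : Type*} {G : SimpleGraph V} {x y : V} {ℓ n : ℕ} {xs ys : Fin ℓ → V} {us vs : Fin n → V}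

theorem nlap_sub_nlap_of_local_structure
    (hinj : Injective (Sum.elim xs (Sum.elim us (Sum.elim ys vs))))
    (hnex : ∀ p, Sum.elim xs (Sum.elim us (Sum.elim ys vs)) p ≠ x)
    (hney : ∀ p, Sum.elim xs (Sum.elim us (Sum.elim ys vs)) p ≠ y)
    (hNx : G.neighborSet x = {y} ∪ range xs ∪ range us)
    (hNy : G.neighborSet y = {x} ∪ range ys ∪ range vs) (f : V → ℝ) (h1 : f y - f x = 1) :
    nlap G f x - nlap G f y =
      (2 + ∑ i, (f (xs i) - f (ys i) + 1) + ∑ j, (f (us j) - f (vs j) + 1)) / (n + ℓ + 1) := by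
  have hxu : Injective (Sum.elim xs us) :=
    (hinj.comp Sum.inl_injective).sumElim (hinj.comp (Sum.inr_injective.comp Sum.inl_injective))
      fun i j h => Sum.inl_ne_inr (hinj (a₁ := .inl i) (a₂ := .inr (.inl j)) h)
  have hyv : Injective (Sum.elim ys vs) := hinj.comp (Sum.inr_injective.comp Sum.inr_injective)
  have hxu_y : ∀ k, Sum.elim xs us k ≠ y := by
    rintro (i | j)
    exacts [hney (.inl i), hney (.inr (.inl j))]
  have hyv_x : ∀ k, Sum.elim ys vs k ≠ x := fun k => hnex (.inr (.inr k))
  rw [nlap_sub_nlap_eq_sum (Option.elim'_injective hxu hxu_y) (Option.elim'_injective hyv hyv_x)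
    (hNx.trans (range_option_elim'_sum_elim ..).symm) (hNy.trans (range_option_elim'_sum_elim ..).symm),
    div_eq_inv_mul]
  simp only [Fintype.card_option, Fintype.card_sum, Fintype.card_fin, Fintype.sum_option,
    Fintype.sum_sum_type, Option.elim', Sum.elim_inl, Sum.elim_inr, h1]
  push_cast
  ring

theorem two_sub_two_mul_le_of_glip {f : V → ℝ} (hf : GLip G f)
    (hd1 : ∀ i j, G.dist (xs i) (ys j) = 3) (hd4 : ∀ j, G.Adj (us j) (vs j)) :
    2 - 2 * (ℓ : ℝ) ≤ 2 + ∑ i, (f (xs i) - f (ys i) + 1) + ∑ j, (f (us j) - f (vs j) + 1) := by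
  have hxs : ∀ i, -2 ≤ f (xs i) - f (ys i) + 1 := fun i => by
    have := hf.sub_le_dist (ys i) (xs i)
    rw [SimpleGraph.dist_comm, hd1] at this
    push_cast at this
    linarith
  have hus : ∀ j, 0 ≤ f (us j) - f (vs j) + 1 := fun j => by
    have := hf.sub_le_dist (vs j) (us j)
    rw [SimpleGraph.dist_eq_one_iff_adj.2 (hd4 j).symm] at this
    push_cast at this
    linarith
  calc 2 - 2 * (ℓ : ℝ) = 2 + ∑ _i : Fin ℓ, (-2 : ℝ) + 0 := by simp; ring
    _ ≤ _ := add_le_add (add_le_add le_rfl (Finset.sum_le_sum fun i _ => hxs i))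
      (Finset.sum_nonneg fun j _ => hus j)

theorem exists_glip_extremal (hconn : G.Connected) (hxy : G.Adj x y)
    (hxxs : ∀ i, G.Adj x (xs i)) (hyys : ∀ i, G.Adj y (ys i))
    (hus : ∀ j, us j ≠ y) (hvs : ∀ j, vs j ≠ x) (huv : ∀ j k, us j ≠ vs k)
    (hd1 : ∀ i j, G.dist (xs i) (ys j) = 3) (hd2 : ∀ i j, G.dist (xs i) (vs j) = 3)
    (hd3 : ∀ i j, G.dist (ys i) (us j) = 3) (hd4 : ∀ j, G.Adj (us j) (vs j)) :
    ∃ f, GLip G f ∧ f y - f x = 1 ∧ (∀ i, f (xs i) - f (ys i) = -3) ∧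
      ∀ j, f (us j) - f (vs j) = -1 := by
  set p : Option (Fin ℓ ⊕ Fin n) → V := Option.elim' x (Sum.elim xs us) with hp
  set c : Option (Fin ℓ ⊕ Fin n) → ℝ := Option.elim' 0 (Sum.elim (fun _ => -1) 0) with hc
  set f := mcShaneExtension G p c
  have hf : GLip G f := glip_mcShaneExtension hconn
  have hle : ∀ w t, f w ≤ c t + G.dist w (p t) := mcShaneExtension_le
  have hge : ∀ {w r}, r ≤ f w ↔ ∀ t, r ≤ c t + G.dist w (p t) := le_mcShaneExtension_iff
  have dist_adj : ∀ {a b}, G.Adj a b → (G.dist a b : ℝ) = 1 := fun h => by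
    exact_mod_cast SimpleGraph.dist_eq_one_iff_adj.2 h
  have one_le_dist : ∀ {a b}, a ≠ b → (1 : ℝ) ≤ G.dist a b := fun h => by
    exact_mod_cast hconn.pos_dist_of_ne h
  have dist_tri : ∀ a b c, (G.dist a c : ℝ) ≤ G.dist a b + G.dist b c := fun a b c => by
    exact_mod_cast hconn.dist_triangle
  have h1 : ∀ i j, (G.dist (ys j) (xs i) : ℝ) = 3 := fun i j => by
    rw [SimpleGraph.dist_comm]; exact_mod_cast hd1 i j
  have h2 : ∀ i j, (G.dist (vs j) (xs i) : ℝ) = 3 := fun i j => by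
    rw [SimpleGraph.dist_comm]; exact_mod_cast hd2 i j
  have h3 : ∀ i j, (G.dist (ys i) (us j) : ℝ) = 3 := fun i j => by exact_mod_cast hd3 i j
  have hfx : f x ≤ 0 := by simpa [hp, hc] using hle x none
  have hfxs : ∀ i, f (xs i) ≤ -1 := fun i => by simpa [hp, hc] using hle (xs i) (some (.inl i))
  have hfus : ∀ j, f (us j) ≤ 0 := fun j => by simpa [hp, hc] using hle (us j) (some (.inr j))
  have hfy : 1 ≤ f y := by
    refine hge.2 ?_
    rintro (_ | i | j) <;> simp only [hp, hc, Option.elim', Sum.elim_inl, Sum.elim_inr, Pi.zero_apply]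
    · linarith [dist_adj hxy.symm]
    · linarith [dist_tri (ys i) y (xs i), h1 i i, dist_adj (hyys i).symm]
    · linarith [one_le_dist (hus j).symm]
  have hfys : ∀ k, 2 ≤ f (ys k) := by
    intro k
    refine hge.2 ?_
    rintro (_ | i | j) <;> simp only [hp, hc, Option.elim', Sum.elim_inl, Sum.elim_inr, Pi.zero_apply]
    · linarith [dist_tri (ys k) x (xs k), h1 k k, dist_adj (hxxs k)]
    · linarith [h1 i k]
    · linarith [h3 k j]
  have hfvs : ∀ k, 1 ≤ f (vs k) := by
    intro k
    refine hge.2 ?_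
    rintro (_ | i | j) <;> simp only [hp, hc, Option.elim', Sum.elim_inl, Sum.elim_inr, Pi.zero_apply]
    · linarith [one_le_dist (hvs k)]
    · linarith [h2 i k]
    · linarith [one_le_dist (huv j k).symm]
  refine ⟨f, hf, ?_, fun i => ?_, fun j => ?_⟩
  · linarith [hf.sub_le_dist y x, dist_adj hxy.symm]
  · linarith [hf.sub_le_dist (ys i) (xs i), h1 i i, hfxs i, hfys i]
  · linarith [hf.sub_le_dist (vs j) (us j), dist_adj (hd4 j).symm, hfus j, hfvs j]

end LocalStructure

theorem kappa_of_local_structure_general {V : Type*} (G : SimpleGraph V)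
    (hconn : G.Connected)
    (x y : V) (hxy : G.Adj x y) (ℓ n : ℕ)
    (xs : Fin ℓ → V) (us : Fin n → V) (ys : Fin ℓ → V) (vs : Fin n → V)
    (hinj : Function.Injective (Sum.elim xs (Sum.elim us (Sum.elim ys vs))))
    (hnex : ∀ p, Sum.elim xs (Sum.elim us (Sum.elim ys vs)) p ≠ x)
    (hney : ∀ p, Sum.elim xs (Sum.elim us (Sum.elim ys vs)) p ≠ y)
    (hNx : G.neighborSet x = {y} ∪ Set.range xs ∪ Set.range us)
    (hNy : G.neighborSet y = {x} ∪ Set.range ys ∪ Set.range vs)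
    (hd1 : ∀ i j, G.dist (xs i) (ys j) = 3)
    (hd2 : ∀ i j, G.dist (xs i) (vs j) = 3)
    (hd3 : ∀ i j, G.dist (ys i) (us j) = 3)
    (hd4 : ∀ j, G.Adj (us j) (vs j)) :
    kappaLLY G x y = (2 - 2 * (ℓ : ℝ)) / ((n : ℝ) + (ℓ : ℝ) + 1) := by
  have hΔ := nlap_sub_nlap_of_local_structure (G := G) hinj hnex hney hNx hNy
  refine kappaLLY_eq_of_le_of_exists (fun f hf h1 => ?_) ?_
  · rw [hΔ f h1]
    gcongr
    exact two_sub_two_mul_le_of_glip hf hd1 hd4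
  · have hxxs : ∀ i, G.Adj x (xs i) := fun i => by
      rw [← SimpleGraph.mem_neighborSet, hNx]; exact .inl (.inr ⟨i, rfl⟩)
    have hyys : ∀ i, G.Adj y (ys i) := fun i => by
      rw [← SimpleGraph.mem_neighborSet, hNy]; exact .inl (.inr ⟨i, rfl⟩)
    have hus : ∀ j, us j ≠ y := fun j => hney (.inr (.inl j))
    have hvs : ∀ j, vs j ≠ x := fun j => hnex (.inr (.inr (.inr j)))
    have huv : ∀ j k, us j ≠ vs k := fun j k h => by
      simpa using hinj (a₁ := .inr (.inl j)) (a₂ := .inr (.inr (.inr k))) h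
    obtain ⟨f, hf, h1, hxys, huvs⟩ :=
      exists_glip_extremal hconn hxy hxxs hyys hus hvs huv hd1 hd2 hd3 hd4
    refine ⟨f, hf, h1, ?_⟩
    rw [hΔ f h1]
    simp [hxys, huvs]
    ring

/-- **Ollivier Ricci curvature from the local structure of an edge (no common triangle).**
If the neighbourhoods of the adjacent vertices `x`, `y` are as in Figure 1 of the paper
(without a common neighbour `z`), then `κ_LLY(x,y) = (2 - 2ℓ)/(n + ℓ + 1)`. -/
theorem kappa_of_local_structure {V : Type*} (G : SimpleGraph V)
    (hconn : G.Connected) (hlf : G.LocallyFinite)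
    (x y : V) (hxy : G.Adj x y) (ℓ n : ℕ)
    (xs : Fin ℓ → V) (us : Fin n → V) (ys : Fin ℓ → V) (vs : Fin n → V)
    (hinj : Function.Injective (Sum.elim xs (Sum.elim us (Sum.elim ys vs))))
    (hnex : ∀ p, Sum.elim xs (Sum.elim us (Sum.elim ys vs)) p ≠ x)
    (hney : ∀ p, Sum.elim xs (Sum.elim us (Sum.elim ys vs)) p ≠ y)
    (hNx : G.neighborSet x = {y} ∪ Set.range xs ∪ Set.range us)
    (hNy : G.neighborSet y = {x} ∪ Set.range ys ∪ Set.range vs)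
    (hd1 : ∀ i j, G.dist (xs i) (ys j) = 3)
    (hd2 : ∀ i j, G.dist (xs i) (vs j) = 3)
    (hd3 : ∀ i j, G.dist (ys i) (us j) = 3)
    (hd4 : ∀ j, G.Adj (us j) (vs j)) :
    kappaLLY G x y = (2 - 2 * (ℓ : ℝ)) / ((n : ℝ) + (ℓ : ℝ) + 1) :=
  kappa_of_local_structure_general G hconn x y hxy ℓ n xs us ys vs hinj hnex hney hNx hNy hd1 hd2
    hd3 hd4
end

section
/- Let G = (V,E) be a connected locally finite simple graph with adjacent vertices x, y, and let ℓ, n ≥ 0. Suppose there are pairwise distinct vertices z, x₁,…,x_ℓ, u₁,…,u_n, y₁,…,y_ℓ, v₁,…,v_n, all distinct from x and y, such that the neighbours of x are exactly {y, z, x₁,…,x_ℓ, u₁,…,u_n} and the neighbours of y are exactly {x, z, y₁,…,y_ℓ, v₁,…,v_n}. Assume (i) d(xᵢ, yⱼ) = 3 for all i,j ∈ {1,…,ℓ}; (ii) d(xᵢ, vⱼ) = 3 and d(yᵢ, uⱼ) = 3 for all i ∈ {1,…,ℓ}, j ∈ {1,…,n}; (iii) uⱼ ∼ vⱼ for all j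 ∈ {1,…,n}. Then the Lin–Lu–Yau Ollivier Ricci curvature of the edge {x,y} with respect to the normalized Laplacian satisfies κ_LLY(x,y) = (3 − 2ℓ)/(n + ℓ + 2). -/
set_option linter.unusedVariables false

attribute [local instance] Classical.propDecidable

/-!
Both endpoints have `ℓ + n + 2` neighbours, so for `f` with `f y - f x = 1` the contributions of
the common neighbour `z` cancel and
`Δf(x) - Δf(y) = (ℓ + n + 3 + Σᵢ (f xᵢ - f yᵢ) + Σⱼ (f uⱼ - f vⱼ)) / (ℓ + n + 2)`.
The Lipschitz condition gives `f xᵢ - f yᵢ ≥ -3` and `f uⱼ - f vⱼ ≥ -1`, hence the lower bound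
`(3 - 2ℓ)/(n + ℓ + 2)`. It is attained by the 1-Lipschitz potential
`w ↦ min (d(x, w), minᵢ d(xᵢ, w) - 1)`, which is `0` at `x`, `1` at `y`, at most `-1` at the `xᵢ`,
at most `1` at the `uⱼ`, and at least `2` at the `yᵢ` and `vⱼ`.
-/

open Finset

section

variable {V : Type*} {G : SimpleGraph V}

lemma nlap_eq_of_neighborSet_eq {v : V} {s : Finset V} (hN : G.neighborSet v = s) (f : V → ℝ) :
    nlap G f v = (#s : ℝ)⁻¹ * ∑ w ∈ s, (f w - f v) := by
  have hind : ∀ w, (if G.Adj v w then f w - f v else 0) = (s : Set V).indicator (f · - f v) w :=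
    fun w => by simp only [Set.indicator_apply, ← hN, SimpleGraph.mem_neighborSet]
  rw [nlap, hN, finsum_congr hind, ← finsum_mem_def, finsum_mem_coe_finset,
    Nat.card_eq_card_toFinset, toFinset_coe]

lemma nlap_eq_of_neighborSet_eq_union {ι : Type*} [Fintype ι] {v b c : V} {e : ι → V}
    (he : Function.Injective e) (hbc : b ≠ c) (hb : ∀ i, e i ≠ b) (hc : ∀ i, e i ≠ c)
    (hN : G.neighborSet v = {b} ∪ {c} ∪ Set.range e) (f : V → ℝ) :
    nlap G f v = ((Fintype.card ι : ℝ) + 2)⁻¹ *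
      ((f b - f v) + (f c - f v) + ∑ i, (f (e i) - f v)) := by
  set s := insert b (insert c (univ.map ⟨e, he⟩))
  have hcs : c ∉ univ.map ⟨e, he⟩ := by simpa using fun i => hc i
  have hbs : b ∉ insert c (univ.map ⟨e, he⟩) := by simpa [hbc] using fun i => hb i
  have hs : G.neighborSet v = s := by
    rw [hN, Set.union_assoc, Set.singleton_union, Set.singleton_union]
    simp [s]
  rw [nlap_eq_of_neighborSet_eq hs, sum_insert hbs, sum_insert hcs, sum_map,
    Function.Embedding.coeFn_mk, card_insert_of_notMem hbs, card_insert_of_notMem hcs, card_map,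
    card_univ]
  push_cast
  ring

noncomputable def distPotential {ι : Type*} [Fintype ι] [Nonempty ι] (G : SimpleGraph V)
    (p : ι → V) (c : ι → ℝ) (w : V) : ℝ :=
  univ.inf' univ_nonempty fun i => c i + G.dist (p i) w

section distPotential

variable {ι : Type*} [Fintype ι] [Nonempty ι] {p : ι → V} {c : ι → ℝ}

lemma distPotential_le (i : ι) (w : V) : distPotential G p c w ≤ c i + G.dist (p i) w :=
  inf'_le _ (mem_univ i)

lemma le_distPotential_iff {m : ℝ} {w : V} :
    m ≤ distPotential G p c w ↔ ∀ i, m ≤ c i + G.dist (p i) w := by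
  simp [distPotential]

lemma distPotential_le_add_dist (hconn : G.Connected) (u v : V) :
    distPotential G p c u ≤ distPotential G p c v + G.dist u v := by
  obtain ⟨i, -, hi⟩ := exists_mem_eq_inf' (univ_nonempty (α := ι))
    fun i => c i + (G.dist (p i) v : ℝ)
  have htri : (G.dist (p i) u : ℝ) ≤ G.dist (p i) v + G.dist v u := by
    exact_mod_cast hconn.dist_triangle
  calc distPotential G p c u ≤ c i + G.dist (p i) u := distPotential_le i u
    _ ≤ c i + G.dist (p i) v + G.dist u v := by rw [G.dist_comm (u := u)]; linarith
    _ = distPotential G p c v + G.dist u v := by rw [distPotential, hi]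

lemma gLip_distPotential (hconn : G.Connected) : GLip G (distPotential G p c) := fun u v =>
  abs_sub_le_iff.2 ⟨by linarith [distPotential_le_add_dist (p := p) (c := c) hconn u v],
    by rw [G.dist_comm]; linarith [distPotential_le_add_dist (p := p) (c := c) hconn v u]⟩

end distPotential

/-- The edge `xy` lies in the single triangle `xyz`, and the remaining neighbours `a k` of `x`
and `b k` of `y` are paired off by the index `k`. -/
structure IsMatchedTriangleEdge {κ : Type*} (G : SimpleGraph V) (x y z : V) (a b : κ → V) :
    Prop where
  injective : Function.Injective (Sum.elim a b)
  ne_left : ∀ k, Sum.elim a b k ≠ x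
  ne_right : ∀ k, Sum.elim a b k ≠ y
  ne_apex : ∀ k, Sum.elim a b k ≠ z
  apex_ne_left : z ≠ x
  apex_ne_right : z ≠ y
  neighborSet_left : G.neighborSet x = {y} ∪ {z} ∪ Set.range a
  neighborSet_right : G.neighborSet y = {x} ∪ {z} ∪ Set.range b

namespace IsMatchedTriangleEdge

variable {κ : Type*} {x y z : V} {a b : κ → V}

lemma symm (hT : IsMatchedTriangleEdge G x y z a b) : IsMatchedTriangleEdge G y x z b a where
  injective := (Sum.elim_injective.1 hT.injective).elim fun ha ⟨hb, hab⟩ =>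
    hb.sumElim ha fun k j => (hab j k).symm
  ne_left := Sum.forall.2 ⟨fun k => hT.ne_right (.inr k), fun k => hT.ne_right (.inl k)⟩
  ne_right := Sum.forall.2 ⟨fun k => hT.ne_left (.inr k), fun k => hT.ne_left (.inl k)⟩
  ne_apex := Sum.forall.2 ⟨fun k => hT.ne_apex (.inr k), fun k => hT.ne_apex (.inl k)⟩
  apex_ne_left := hT.apex_ne_right
  apex_ne_right := hT.apex_ne_left
  neighborSet_left := hT.neighborSet_right
  neighborSet_right := hT.neighborSet_left

lemma nlap_left [Fintype κ] (hT : IsMatchedTriangleEdge G x y z a b) (f : V → ℝ) :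
    nlap G f x = ((Fintype.card κ : ℝ) + 2)⁻¹ *
      ((f y - f x) + (f z - f x) + ∑ k, (f (a k) - f x)) :=
  nlap_eq_of_neighborSet_eq_union (hT.injective.comp Sum.inl_injective) hT.apex_ne_right.symm
    (fun k => hT.ne_right (.inl k)) (fun k => hT.ne_apex (.inl k)) hT.neighborSet_left f

lemma nlap_sub_nlap [Fintype κ] (hT : IsMatchedTriangleEdge G x y z a b) {f : V → ℝ}
    (hf : f y - f x = 1) :
    nlap G f x - nlap G f y =
      ((Fintype.card κ : ℝ) + 3 + ∑ k, (f (a k) - f (b k))) / (Fintype.card κ + 2) := by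
  have hsum : ∑ k, (f (a k) - f x) - ∑ k, (f (b k) - f y) =
      ∑ k, (f (a k) - f (b k)) + Fintype.card κ := by
    rw [← sum_sub_distrib, Fintype.card_eq_sum_ones, Nat.cast_sum, Nat.cast_one, ← sum_add_distrib]
    exact sum_congr rfl fun k _ => by linarith
  rw [hT.nlap_left, hT.symm.nlap_left, div_eq_inv_mul, ← mul_sub]
  linear_combination ((Fintype.card κ : ℝ) + 2)⁻¹ * (hsum + 3 * hf)

lemma two_le_dist_left (hT : IsMatchedTriangleEdge G x y z a b) (hconn : G.Connected) (k : κ) :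
    2 ≤ G.dist x (b k) := by
  refine hconn.one_lt_dist_of_ne_of_not_adj (hT.ne_left (.inr k)).symm fun hadj => ?_
  have hmem : b k ∈ G.neighborSet x := hadj
  rw [hT.neighborSet_left] at hmem
  rcases hmem with (hy | hz) | ⟨j, hj⟩
  · exact hT.ne_right (.inr k) hy
  · exact hT.ne_apex (.inr k) hz
  · exact hT.injective.ne Sum.inl_ne_inr hj

lemma kappaLLY_eq [Fintype κ] (hT : IsMatchedTriangleEdge G x y z a b) {f : V → ℝ}
    (hf : GLip G f) (hfxy : f y - f x = 1)
    (hopt : ∀ k, f (a k) - f (b k) ≤ -G.dist (a k) (b k)) :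
    kappaLLY G x y =
      ((Fintype.card κ : ℝ) + 3 - ∑ k, (G.dist (a k) (b k) : ℝ)) / (Fintype.card κ + 2) := by
  have hlip : ∀ g, GLip G g → ∀ k, -(G.dist (a k) (b k) : ℝ) ≤ g (a k) - g (b k) :=
    fun g hg k => neg_le_of_abs_le (hg _ _)
  refine IsLeast.csInf_eq ⟨⟨f, hf, hfxy, ?_⟩, ?_⟩
  · rw [hT.nlap_sub_nlap hfxy, sub_eq_add_neg, ← sum_neg_distrib,
      sum_congr rfl fun k _ => le_antisymm (hlip f hf k) (hopt k)]
  · rintro r ⟨g, hg, hgxy, rfl⟩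
    rw [hT.nlap_sub_nlap hgxy, sub_eq_add_neg, ← sum_neg_distrib]
    gcongr with k
    exact hlip g hg k

lemma of_sumElim {κ₁ κ₂ : Type*} {xs ys : κ₁ → V} {us vs : κ₂ → V}
    (hinj : Function.Injective (Sum.elim xs (Sum.elim us (Sum.elim ys vs))))
    (hnex : ∀ p, Sum.elim xs (Sum.elim us (Sum.elim ys vs)) p ≠ x)
    (hney : ∀ p, Sum.elim xs (Sum.elim us (Sum.elim ys vs)) p ≠ y)
    (hnez : ∀ p, Sum.elim xs (Sum.elim us (Sum.elim ys vs)) p ≠ z) (hzx : z ≠ x) (hzy : z ≠ y)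
    (hNx : G.neighborSet x = {y} ∪ {z} ∪ Set.range xs ∪ Set.range us)
    (hNy : G.neighborSet y = {x} ∪ {z} ∪ Set.range ys ∪ Set.range vs) :
    IsMatchedTriangleEdge G x y z (Sum.elim xs us) (Sum.elim ys vs) := by
  have hassoc : Sum.elim (Sum.elim xs us) (Sum.elim ys vs) =
      Sum.elim xs (Sum.elim us (Sum.elim ys vs)) ∘ Equiv.sumAssoc _ _ _ := by
    ext ((i | j) | k) <;> rfl
  exact
    { injective := hassoc ▸ hinj.comp (Equiv.injective _)
      ne_left := by rw [hassoc]; exact fun k => hnex _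
      ne_right := by rw [hassoc]; exact fun k => hney _
      ne_apex := by rw [hassoc]; exact fun k => hnez _
      apex_ne_left := hzx
      apex_ne_right := hzy
      neighborSet_left := by rw [hNx, Set.Sum.elim_range, Set.union_assoc]
      neighborSet_right := by rw [hNy, Set.Sum.elim_range, Set.union_assoc] }

end IsMatchedTriangleEdge

/-- `w ↦ min (d(x, w), minᵢ d(a i, w) - 1)` -/
noncomputable def edgePotential {ι : Type*} [Fintype ι] (G : SimpleGraph V) (x : V) (a : ι → V) :
    V → ℝ :=
  distPotential G (fun o : Option ι => o.elim x a) (fun o => o.elim 0 fun _ => -1)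

section edgePotential

variable {ι : Type*} [Fintype ι] {x : V} {a : ι → V}

lemma edgePotential_apply_left (hconn : G.Connected) (hx : ∀ i, a i ≠ x) :
    edgePotential G x a x = 0 := by
  refine le_antisymm ((distPotential_le none x).trans_eq (by simp)) ?_
  refine le_distPotential_iff.2 (Option.forall.2 ⟨by simp, fun i => ?_⟩)
  have : (1 : ℝ) ≤ G.dist (a i) x := by exact_mod_cast hconn.pos_dist_of_ne (hx i)
  simp only [Option.elim_some]
  linarith

lemma edgePotential_apply_of_adj {y : V} (hxy : G.Adj x y) (hy : ∀ i, 2 ≤ G.dist y (a i)) :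
    edgePotential G x a y = 1 := by
  have hdxy : (G.dist x y : ℝ) = 1 := by exact_mod_cast G.dist_eq_one_iff_adj.2 hxy
  refine le_antisymm ((distPotential_le none y).trans_eq (by simp [hdxy])) ?_
  refine le_distPotential_iff.2 (Option.forall.2 ⟨by simp [hdxy], fun i => ?_⟩)
  have : (2 : ℝ) ≤ G.dist (a i) y := by rw [G.dist_comm]; exact_mod_cast hy i
  simp only [Option.elim_some]
  linarith

lemma edgePotential_le_neg_one (i : ι) : edgePotential G x a (a i) ≤ -1 :=
  (distPotential_le (some i) (a i)).trans_eq (by simp)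

lemma edgePotential_le_one_of_adj {w : V} (hxw : G.Adj x w) : edgePotential G x a w ≤ 1 :=
  (distPotential_le none w).trans_eq (by simp [hxw])

lemma two_le_edgePotential {w : V} (hxw : 2 ≤ G.dist x w) (hw : ∀ i, 3 ≤ G.dist (a i) w) :
    2 ≤ edgePotential G x a w := by
  refine le_distPotential_iff.2 (Option.forall.2 ⟨?_, fun i => ?_⟩)
  · simpa using (show (2 : ℝ) ≤ G.dist x w by exact_mod_cast hxw)
  · have : (3 : ℝ) ≤ G.dist (a i) w := by exact_mod_cast hw i
    simp only [Option.elim_some]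
    linarith

lemma gLip_edgePotential (hconn : G.Connected) : GLip G (edgePotential G x a) :=
  gLip_distPotential hconn

end edgePotential

end

theorem kappa_of_local_structure_triangle_general {V : Type*} (G : SimpleGraph V)
    (hconn : G.Connected)
    (x y : V) (hxy : G.Adj x y) (z : V) (ℓ n : ℕ)
    (xs : Fin ℓ → V) (us : Fin n → V) (ys : Fin ℓ → V) (vs : Fin n → V)
    (hinj : Function.Injective (Sum.elim xs (Sum.elim us (Sum.elim ys vs))))
    (hnex : ∀ p, Sum.elim xs (Sum.elim us (Sum.elim ys vs)) p ≠ x)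
    (hney : ∀ p, Sum.elim xs (Sum.elim us (Sum.elim ys vs)) p ≠ y)
    (hnez : ∀ p, Sum.elim xs (Sum.elim us (Sum.elim ys vs)) p ≠ z)
    (hzx : z ≠ x) (hzy : z ≠ y)
    (hNx : G.neighborSet x = {y} ∪ {z} ∪ Set.range xs ∪ Set.range us)
    (hNy : G.neighborSet y = {x} ∪ {z} ∪ Set.range ys ∪ Set.range vs)
    (hd1 : ∀ i j, G.dist (xs i) (ys j) = 3)
    (hd2 : ∀ i j, G.dist (xs i) (vs j) = 3)
    (hd4 : ∀ j, G.Adj (us j) (vs j)) :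
    kappaLLY G x y = (3 - 2 * (ℓ : ℝ)) / ((n : ℝ) + (ℓ : ℝ) + 2) := by
  have hT := IsMatchedTriangleEdge.of_sumElim hinj hnex hney hnez hzx hzy hNx hNy
  have hfar : ∀ k, 2 ≤ edgePotential G x xs (Sum.elim ys vs k) := fun k =>
    two_le_edgePotential (hT.two_le_dist_left hconn k) fun i => by cases k <;> simp [hd1, hd2]
  have hfxy : edgePotential G x xs y - edgePotential G x xs x = 1 := by
    rw [edgePotential_apply_of_adj (a := xs) hxy fun i => hT.symm.two_le_dist_left hconn (.inl i),
      edgePotential_apply_left (a := xs) hconn fun i => hnex (.inl i), sub_zero]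
  have hopt : ∀ k, edgePotential G x xs (Sum.elim xs us k) - edgePotential G x xs (Sum.elim ys vs k)
      ≤ -G.dist (Sum.elim xs us k) (Sum.elim ys vs k) := by
    refine Sum.forall.2 ⟨fun i => ?_, fun j => ?_⟩
    · have hys := hfar (.inl i)
      simp only [Sum.elim_inl, hd1, Nat.cast_ofNat] at hys ⊢
      linarith [edgePotential_le_neg_one (G := G) (x := x) (a := xs) i]
    · have hxu : G.Adj x (us j) := (Set.ext_iff.1 hNx (us j)).2 (.inr ⟨j, rfl⟩)
      have hvs := hfar (.inr j)
      simp only [Sum.elim_inr, G.dist_eq_one_iff_adj.2 (hd4 j), Nat.cast_one] at hvs ⊢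
      linarith [edgePotential_le_one_of_adj (a := xs) hxu]
  rw [hT.kappaLLY_eq (gLip_edgePotential hconn) hfxy hopt, Fintype.sum_sum_type]
  simp only [Fintype.card_sum, Fintype.card_fin, Sum.elim_inl, Sum.elim_inr, hd1,
    G.dist_eq_one_iff_adj.2 (hd4 _), sum_const, card_univ, nsmul_eq_mul]
  push_cast
  ring

/-- **Ollivier Ricci curvature from the local structure of an edge (with a common triangle).**
If the neighbourhoods of the adjacent vertices `x`, `y` are as in Figure 1 of the paper
(with a common neighbour `z`), then `κ_LLY(x,y) = (3 - 2ℓ)/(n + ℓ + 2)`. -/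
theorem kappa_of_local_structure_triangle {V : Type*} (G : SimpleGraph V)
    (hconn : G.Connected) (hlf : G.LocallyFinite)
    (x y : V) (hxy : G.Adj x y) (z : V) (ℓ n : ℕ)
    (xs : Fin ℓ → V) (us : Fin n → V) (ys : Fin ℓ → V) (vs : Fin n → V)
    (hinj : Function.Injective (Sum.elim xs (Sum.elim us (Sum.elim ys vs))))
    (hnex : ∀ p, Sum.elim xs (Sum.elim us (Sum.elim ys vs)) p ≠ x)
    (hney : ∀ p, Sum.elim xs (Sum.elim us (Sum.elim ys vs)) p ≠ y)
    (hnez : ∀ p, Sum.elim xs (Sum.elim us (Sum.elim ys vs)) p ≠ z)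
    (hzx : z ≠ x) (hzy : z ≠ y)
    (hNx : G.neighborSet x = {y} ∪ {z} ∪ Set.range xs ∪ Set.range us)
    (hNy : G.neighborSet y = {x} ∪ {z} ∪ Set.range ys ∪ Set.range vs)
    (hd1 : ∀ i j, G.dist (xs i) (ys j) = 3)
    (hd2 : ∀ i j, G.dist (xs i) (vs j) = 3)
    (hd3 : ∀ i j, G.dist (ys i) (us j) = 3)
    (hd4 : ∀ j, G.Adj (us j) (vs j)) :
    kappaLLY G x y = (3 - 2 * (ℓ : ℝ)) / ((n : ℝ) + (ℓ : ℝ) + 2) :=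
  kappa_of_local_structure_triangle_general G hconn x y hxy z ℓ n xs us ys vs hinj hnex hney hnez
    hzx hzy hNx hNy hd1 hd2 hd4
end

section
/- Let Γ be a RAACH with generating set S, defining graph (H,m) and associated pair (H*,w), and set D = |S*|. If either R₃ = ∅ and D ≥ 2, or R₃ = S and D ≥ 4, then the second smallest eigenvalue of −Δ_{H*} satisfies λ₂(−Δ_{H*}) ≤ D. -/
set_option linter.unusedVariables false

attribute [local instance] Classical.propDecidable

open scoped commutatorElement

lemma cond1_symm {G : Type*} [Group G] (s t : G) :
    (Commute s t ∧ t ≠ s ∧ t ≠ s⁻¹) ↔ (Commute t s ∧ s ≠ t ∧ s ≠ t⁻¹) := by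
  constructor <;> rintro ⟨hc, hne, hni⟩ <;>
    exact ⟨hc.symm, hne.symm, fun h => hni (by rw [h, inv_inv])⟩

lemma cond_ord_symm {G : Type*} [Group G] (s t : G) (k : ℕ) :
    (t = s⁻¹ ∧ orderOf s = k) ↔ (s = t⁻¹ ∧ orderOf t = k) := by
  constructor <;> rintro ⟨h, ho⟩ <;> subst h <;> simp [orderOf_inv, ho]

lemma apWeight_symm {S : Type*} (H : SimpleGraph S) (m : S → ℕ∞) (s t : RAACH H m) :
    apWeight H m s t = apWeight H m t s := by
  unfold apWeight
  by_cases h1 : Commute s t ∧ t ≠ s ∧ t ≠ s⁻¹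
  · rw [if_pos h1, if_pos ((cond1_symm s t).mp h1)]
  · rw [if_neg h1, if_neg (fun h => h1 ((cond1_symm t s).mp h))]
    by_cases h2 : t = s⁻¹ ∧ orderOf s = 4
    · rw [if_pos h2, if_pos ((cond_ord_symm s t 4).mp h2)]
    · rw [if_neg h2, if_neg (fun h => h2 ((cond_ord_symm t s 4).mp h))]
      by_cases h3 : t = s⁻¹ ∧ orderOf s = 3
      · rw [if_pos h3, if_pos ((cond_ord_symm s t 3).mp h3)]
      · rw [if_neg h3, if_neg (fun h => h3 ((cond_ord_symm t s 3).mp h))]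

lemma sstar_finite {S : Type*} [Fintype S] (H : SimpleGraph S) (m : S → ℕ∞) :
    (Sstar H m).Finite := by
  have hsub : Sstar H m ⊆
      Set.range (raachGen H m) ∪ Set.range (fun s => (raachGen H m s)⁻¹) := by
    rintro g ⟨s, h | h⟩
    · exact Or.inl ⟨s, h.symm⟩
    · exact Or.inr ⟨s, h.symm⟩
  exact ((Set.finite_range _).union (Set.finite_range _)).subset hsub

noncomputable instance sstarFintype {S : Type*} [Fintype S] (H : SimpleGraph S) (m : S → ℕ∞) :
    Fintype (Sstar H m) :=
  (sstar_finite H m).fintype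

/-- The matrix of `-Δ_{H*}`, the negative of the weighted Laplacian of the associated pair
`(H*, w)` (with vertex measure ≡ 1), indexed by `S*`. -/
noncomputable def negLapMat {S : Type*} [Fintype S] (H : SimpleGraph S) (m : S → ℕ∞) :
    Matrix (Sstar H m) (Sstar H m) ℝ :=
  fun s t => if s = t then ∑ u : Sstar H m, (apWeight H m s.1 u.1 : ℝ)
             else -(apWeight H m s.1 t.1 : ℝ)

lemma negLapMat_isHermitian {S : Type*} [Fintype S] (H : SimpleGraph S) (m : S → ℕ∞) :
    (negLapMat H m).IsHermitian := by
  show (negLapMat H m).conjTranspose = negLapMat H m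
  ext s t
  simp only [Matrix.conjTranspose_apply, star_trivial]
  unfold negLapMat
  by_cases h : s = t
  · subst h; rfl
  · rw [if_neg (Ne.symm h), if_neg h, apWeight_symm H m t.1 s.1]

/-- The second smallest element (counted with multiplicity) of a finite family of reals;
applied to the eigenvalues of a symmetric matrix it is the second smallest eigenvalue. -/
noncomputable def lambda2 {n : Type*} [Fintype n] (μ : n → ℝ) : ℝ :=
  ((Finset.univ.val.map μ).sort (· ≤ ·)).getD 1 0

/-! Since `-Δ_{H*} 1 = 0` and `D ≥ 0`, the min–max principle gives `λ₂ ≤ D` as soon as some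
nonzero `f ⊥ 1` has `⟨f, -Δ f⟩ ≤ D ‖f‖²`. As
`2 ⟨f, -Δ f⟩ = ∑ w(s,t) (f s - f t)²` and `∑_{s,t} (f s - f t)² = 2 D ‖f‖²` for `f ⊥ 1`, this holds
whenever `f s = f t` on the pairs of weight `2`, i.e. `t = s⁻¹` of order `3`. The order of a
generator `s` is exactly `m(s)`, so if `R₃ = ∅` there are no such pairs and `f = 1_x - 1_y` works;
if `D ≥ 4`, `S*` contains two disjoint inverse classes `{a, a⁻¹}`, `{b, b⁻¹}`, and the balanced
difference of their indicators is constant on inverse pairs. -/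

open Matrix Finset

lemma List.Pairwise.getD_one_le {α : Type*} [LinearOrder α] {l : List α}
    (hl : l.Pairwise (· ≤ ·)) {d x : α} (h : 2 ≤ (l.filter (· ≤ x)).length) :
    l.getD 1 d ≤ x := by
  match l, hl with
  | [], _ => simp at h
  | [a], _ => exact absurd ((List.length_filter_le _ [a]).trans_lt' h) (by simp)
  | a :: b :: t, hl =>
    show b ≤ x
    by_contra! hxb
    have hnil : (b :: t).filter (· ≤ x) = [] := by
      refine List.filter_eq_nil_iff.mpr fun y hy hyx => ?_
      have hby : b ≤ y := by
        rcases List.mem_cons.mp hy with rfl | hy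
        · exact le_rfl
        · exact (List.pairwise_cons.mp (List.pairwise_cons.mp hl).2).1 y hy
      exact absurd (decide_eq_true_iff.mp hyx) (not_le.mpr (hxb.trans_le hby))
    rw [List.filter_cons, hnil] at h
    split_ifs at h <;> simp at h

lemma lambda2_le_of_ne {n : Type*} [Fintype n] {μ : n → ℝ} {x : ℝ} {i j : n} (hij : i ≠ j)
    (hi : μ i ≤ x) (hj : μ j ≤ x) : lambda2 μ ≤ x := by
  apply List.Pairwise.getD_one_le (Multiset.pairwise_sort _ _)
  have hsub : ({i, j} : Finset n) ⊆ univ.filter (μ · ≤ x) := by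
    simp [Finset.insert_subset_iff, hi, hj]
  calc 2 = #{i, j} := (card_pair hij).symm
    _ ≤ #(univ.filter (μ · ≤ x)) := card_le_card hsub
    _ = _ := by
      rw [← Multiset.coe_card, ← Multiset.filter_coe, Multiset.sort_eq, Multiset.filter_map,
        Multiset.card_map]
      rfl

section Spectral
variable {n : Type*} [Fintype n]

lemma exists_ne_le_of_sum_mul_sq_le {μ g ζ : n → ℝ} {c : ℝ} (hc : 0 ≤ c)
    (hμζ : ∀ i, μ i * ζ i = 0) (hζ : ζ ≠ 0) (hg : g ≠ 0) (horth : ∑ i, g i * ζ i = 0)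
    (hray : ∑ i, μ i * g i ^ 2 ≤ c * ∑ i, g i ^ 2) :
    ∃ i j, i ≠ j ∧ μ i ≤ c ∧ μ j ≤ c := by
  by_contra! hcon
  obtain ⟨i₀, hi₀⟩ := Function.ne_iff.mp hζ
  have hμi₀ : μ i₀ = 0 := (mul_eq_zero.mp (hμζ i₀)).resolve_right hi₀
  have hgt : ∀ i ≠ i₀, c < μ i := fun i hi => hcon i₀ i hi.symm (hμi₀ ▸ hc)
  have hζi : ∀ i ≠ i₀, ζ i = 0 := fun i hi =>
    (mul_eq_zero.mp (hμζ i)).resolve_left (hc.trans_lt (hgt i hi)).ne'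
  have hgi₀ : g i₀ = 0 := by
    rw [sum_eq_single i₀ (fun i _ hi => by rw [hζi i hi, mul_zero]) (by simp)] at horth
    exact (mul_eq_zero.mp horth).resolve_right hi₀
  obtain ⟨k, hk⟩ := Function.ne_iff.mp hg
  have hpos : 0 < ∑ i, (μ i - c) * g i ^ 2 := by
    refine sum_pos' (fun i _ => ?_) ⟨k, mem_univ k, ?_⟩
    · rcases eq_or_ne i i₀ with rfl | hi
      · simp [hgi₀]
      · exact mul_nonneg (sub_nonneg.mpr (hgt i hi).le) (sq_nonneg _)
    · have hki₀ : k ≠ i₀ := fun h => hk (h ▸ hgi₀)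
      exact mul_pos (sub_pos.mpr (hgt k hki₀)) (sq_pos_of_ne_zero hk)
  simp only [sub_mul, sum_sub_distrib, ← mul_sum] at hpos
  linarith

namespace Matrix.IsHermitian
variable {A : Matrix n n ℝ} (hA : A.IsHermitian)

lemma sum_eigenvectorBasis_dotProduct_mul (u v : n → ℝ) :
    ∑ i, (hA.eigenvectorBasis i ⬝ᵥ u) * (hA.eigenvectorBasis i ⬝ᵥ v) = u ⬝ᵥ v := by
  have := hA.eigenvectorBasis.sum_inner_mul_inner (WithLp.toLp 2 v) (WithLp.toLp 2 u)
  simp only [EuclideanSpace.inner_eq_star_dotProduct, star_trivial] at this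
  simpa [dotProduct_comm _ v, dotProduct_comm u, mul_comm] using this

lemma eigenvectorBasis_dotProduct_mulVec (i : n) (v : n → ℝ) :
    hA.eigenvectorBasis i ⬝ᵥ (A *ᵥ v) = hA.eigenvalues i * (hA.eigenvectorBasis i ⬝ᵥ v) := by
  rw [dotProduct_mulVec, ← mulVec_transpose, ← conjTranspose_eq_transpose_of_trivial,
    hA.eq, mulVec_eigenvectorBasis, smul_dotProduct, smul_eq_mul]

lemma lambda2_eigenvalues_le {z f : n → ℝ} {c : ℝ} (hc : 0 ≤ c) (hz : A *ᵥ z = 0)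
    (hz0 : z ≠ 0) (hf0 : f ≠ 0) (horth : f ⬝ᵥ z = 0)
    (hray : f ⬝ᵥ (A *ᵥ f) ≤ c * (f ⬝ᵥ f)) : lambda2 hA.eigenvalues ≤ c := by
  set coord : (n → ℝ) → n → ℝ := fun v i => hA.eigenvectorBasis i ⬝ᵥ v
  have coord_ne_zero {v : n → ℝ} (hv : v ≠ 0) : coord v ≠ 0 := fun h0 => hv <|
    dotProduct_self_eq_zero.mp <| by
      rw [← hA.sum_eigenvectorBasis_dotProduct_mul]
      simp [coord, funext_iff.mp h0]
  obtain ⟨i, j, hij, hi, hj⟩ := exists_ne_le_of_sum_mul_sq_le (g := coord f) hc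
    (fun i => by rw [← hA.eigenvectorBasis_dotProduct_mulVec, hz, dotProduct_zero])
    (coord_ne_zero hz0) (coord_ne_zero hf0)
    (by rw [hA.sum_eigenvectorBasis_dotProduct_mul, horth])
    (by simpa [coord, sq, ← mul_assoc, mul_comm, hA.sum_eigenvectorBasis_dotProduct_mul,
      ← hA.eigenvectorBasis_dotProduct_mulVec] using hray)
  exact lambda2_le_of_ne hij hi hj

end Matrix.IsHermitian
end Spectral

lemma sum_sum_sub_sq {n : Type*} [Fintype n] (f : n → ℝ) :
    ∑ s, ∑ t, (f s - f t) ^ 2 = 2 * Fintype.card n * ∑ s, f s ^ 2 - 2 * (∑ s, f s) ^ 2 := by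
  simp only [sub_sq, sum_add_distrib, sum_sub_distrib, sum_const, card_univ, nsmul_eq_mul,
    ← mul_sum, ← sum_mul, mul_assoc]
  ring

section WeightedLaplacian
variable {n : Type*} [Fintype n] [DecidableEq n]

def weightedLapMatrix (w : n → n → ℝ) : Matrix n n ℝ :=
  diagonal (fun s => ∑ t, w s t) - of w

lemma weightedLapMatrix_mulVec_apply (w : n → n → ℝ) (f : n → ℝ) (s : n) :
    (weightedLapMatrix w *ᵥ f) s = ∑ t, w s t * (f s - f t) := by
  simp only [weightedLapMatrix, sub_mulVec, Pi.sub_apply, mulVec_diagonal, mul_sub,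
    sum_sub_distrib, sum_mul]
  rfl

lemma weightedLapMatrix_mulVec_one (w : n → n → ℝ) : weightedLapMatrix w *ᵥ 1 = 0 := by
  ext s
  simp [weightedLapMatrix_mulVec_apply]

lemma two_mul_dotProduct_weightedLapMatrix_mulVec {w : n → n → ℝ} (hw : ∀ s t, w s t = w t s)
    (f : n → ℝ) :
    2 * (f ⬝ᵥ (weightedLapMatrix w *ᵥ f)) = ∑ s, ∑ t, w s t * (f s - f t) ^ 2 := by
  have hform : f ⬝ᵥ (weightedLapMatrix w *ᵥ f) = ∑ s, ∑ t, w s t * (f s * (f s - f t)) := by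
    simp only [dotProduct, weightedLapMatrix_mulVec_apply, mul_sum]
    exact sum_congr rfl fun s _ => sum_congr rfl fun t _ => by ring
  have hswap : ∑ s, ∑ t, w s t * (f s * (f s - f t)) = ∑ s, ∑ t, w s t * (f t * (f t - f s)) := by
    rw [sum_comm]
    simp only [hw]
  rw [two_mul, hform]
  nth_rw 2 [hswap]
  rw [← sum_add_distrib]
  exact sum_congr rfl fun s _ => by rw [← sum_add_distrib]; exact sum_congr rfl fun t _ => by ring

end WeightedLaplacian

lemma dotProduct_weightedLapMatrix_mulVec_le {n : Type*} [Fintype n] [DecidableEq n]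
    {w : n → n → ℝ} (hw : ∀ s t, w s t = w t s) {f : n → ℝ} (hsum : ∑ s, f s = 0)
    (hwf : ∀ s t, w s t * (f s - f t) ^ 2 ≤ (f s - f t) ^ 2) :
    f ⬝ᵥ (weightedLapMatrix w *ᵥ f) ≤ Fintype.card n * (f ⬝ᵥ f) := by
  have hform := two_mul_dotProduct_weightedLapMatrix_mulVec hw f
  have hle : ∑ s, ∑ t, w s t * (f s - f t) ^ 2 ≤ ∑ s, ∑ t, (f s - f t) ^ 2 :=
    sum_le_sum fun s _ => sum_le_sum fun t _ => hwf s t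
  have hnorm : f ⬝ᵥ f = ∑ s, f s ^ 2 := by simp [dotProduct, sq]
  rw [sum_sum_sub_sq, hsum] at hle
  rw [hnorm]
  linarith

lemma lambda2_le_card_of_eq_weightedLapMatrix {n : Type*} [Fintype n] [DecidableEq n]
    {A : Matrix n n ℝ} (hA : A.IsHermitian) {w : n → n → ℝ} (hAw : A = weightedLapMatrix w)
    (hw : ∀ s t, w s t = w t s) {f : n → ℝ} (hf0 : f ≠ 0) (hsum : ∑ s, f s = 0)
    (hwf : ∀ s t, w s t * (f s - f t) ^ 2 ≤ (f s - f t) ^ 2) :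
    lambda2 hA.eigenvalues ≤ Fintype.card n := by
  subst hAw
  have : Nonempty n := not_isEmpty_iff.mp fun _ => hf0 (Subsingleton.elim _ _)
  exact hA.lambda2_eigenvalues_le (Nat.cast_nonneg _) (weightedLapMatrix_mulVec_one w)
    one_ne_zero hf0 (by rw [dotProduct_one, hsum])
    (dotProduct_weightedLapMatrix_mulVec_le hw hsum hwf)

section BalancedIndicator
variable {n : Type*} [DecidableEq n]

def balancedIndicator (A B : Finset n) (x : n) : ℝ :=
  (if x ∈ A then (#B : ℝ) else 0) - (if x ∈ B then (#A : ℝ) else 0)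

lemma sum_balancedIndicator [Fintype n] (A B : Finset n) : ∑ x, balancedIndicator A B x = 0 := by
  simp [balancedIndicator, sum_sub_distrib, sum_ite_mem, mul_comm]

lemma balancedIndicator_ne_zero {A B : Finset n} (hAB : Disjoint A B) (hA : A.Nonempty)
    (hB : B.Nonempty) : balancedIndicator A B ≠ 0 := by
  obtain ⟨a, ha⟩ := hA
  intro h0
  simpa [balancedIndicator, ha, disjoint_left.mp hAB ha, hB.ne_empty] using congrFun h0 a

end BalancedIndicator

section InvClass
variable {G : Type*} [Group G] [DecidableEq G] {T : Set G} [Fintype T]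

def invClass (a : T) : Finset T := {x | x.1 = a.1 ∨ x.1 = a.1⁻¹}

lemma mem_invClass {a x : T} : x ∈ invClass a ↔ x.1 = a.1 ∨ x.1 = a.1⁻¹ := by
  simp [invClass]

lemma self_mem_invClass (a : T) : a ∈ invClass a := mem_invClass.mpr (Or.inl rfl)

lemma card_invClass_le_two (a : T) : #(invClass a) ≤ 2 := by
  have hsub : (invClass a).map (Function.Embedding.subtype _) ⊆ {a.1, a.1⁻¹} := by
    intro g hg
    obtain ⟨x, hx, rfl⟩ := mem_map.mp hg
    simpa using mem_invClass.mp hx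
  simpa using (card_le_card hsub).trans card_le_two

lemma mem_invClass_iff_of_eq_inv {a x y : T} (hxy : y.1 = x.1⁻¹) :
    y ∈ invClass a ↔ x ∈ invClass a := by
  simp only [mem_invClass, hxy, inv_eq_iff_eq_inv, inv_inv]
  exact or_comm

lemma disjoint_invClass {a b : T} (hb : b ∉ invClass a) :
    Disjoint (invClass a) (invClass b) := by
  refine disjoint_left.mpr fun x hxa hxb => hb (mem_invClass.mpr ?_)
  rcases mem_invClass.mp hxa with ha | ha <;> rcases mem_invClass.mp hxb with hb | hb
  · exact Or.inl (hb.symm.trans ha)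
  · exact Or.inr (by rw [← inv_inv b.1, ← hb, ha])
  · exact Or.inr (hb.symm.trans ha)
  · exact Or.inl (inv_injective (hb.symm.trans ha))

end InvClass

section RAACH
variable {S : Type*} (H : SimpleGraph S) (m : S → ℕ∞)

lemma raachGen_pow_toNat (s : S) : raachGen H m s ^ (m s).toNat = 1 := by
  cases hs : m s with
  | top => simp
  | coe k =>
    rw [ENat.toNat_natCast, raachGen, PresentedGroup.of, ← map_pow]
    exact PresentedGroup.one_of_mem (Or.inl ⟨s, k, hs, rfl⟩)

/-- The exponent sum of the generator `s`, modulo `m(s)` (`ZMod 0 = ℤ` covers `m(s) = ∞`). -/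
noncomputable def raachToZMod [DecidableEq S] (s : S) :
    RAACH H m →* Multiplicative (ZMod (m s).toNat) :=
  PresentedGroup.toGroup (f := Pi.mulSingle s (Multiplicative.ofAdd 1)) <| by
    rintro r (⟨t, k, ht, rfl⟩ | ⟨t, u, -, rfl⟩)
    · rw [map_pow, FreeGroup.lift_apply_of]
      rcases eq_or_ne t s with rfl | hts
      · rw [Pi.mulSingle_eq_same, ← ofAdd_nsmul, ht, ENat.toNat_natCast, nsmul_one,
          ZMod.natCast_self, ofAdd_zero]
      · rw [Pi.mulSingle_eq_of_ne hts, one_pow]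
    · rw [map_commutatorElement, commutatorElement_eq_one_iff_commute]
      exact Commute.all _ _

lemma orderOf_raachGen (s : S) : orderOf (raachGen H m s) = (m s).toNat := by
  refine Nat.dvd_antisymm (orderOf_dvd_of_pow_eq_one (raachGen_pow_toNat H m s)) ?_
  have hmap := orderOf_map_dvd (raachToZMod H m s) (raachGen H m s)
  rwa [raachGen, raachToZMod, PresentedGroup.toGroup.of, Pi.mulSingle_eq_same,
    orderOf_ofAdd_eq_addOrderOf, ZMod.addOrderOf_one] at hmap

lemma orderOf_ne_of_mem_Sstar {k : ℕ} (hk : k ≠ 0) (hm : ∀ s, m s ≠ k) {g : RAACH H m}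
    (hg : g ∈ Sstar H m) : orderOf g ≠ k := by
  obtain ⟨s, rfl | rfl⟩ := hg <;>
    simpa only [orderOf_inv, orderOf_raachGen, ne_eq, ENat.toNat_eq_iff hk] using hm s

lemma apWeight_self (g : RAACH H m) : apWeight H m g g = 0 := by
  have hord : g = g⁻¹ → orderOf g ∣ 2 := fun h =>
    orderOf_dvd_of_pow_eq_one (by rw [sq]; nth_rw 2 [h]; exact mul_inv_cancel g)
  unfold apWeight
  split_ifs with h1 h4 h3
  · exact absurd rfl h1.2.1
  · exact absurd (hord h4.1) (by rw [h4.2]; decide)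
  · exact absurd (hord h3.1) (by rw [h3.2]; decide)
  · rfl

lemma apWeight_le_one_or (g h : RAACH H m) :
    apWeight H m g h ≤ 1 ∨ (h = g⁻¹ ∧ orderOf g = 3) := by
  unfold apWeight
  split_ifs <;> simp_all

lemma negLapMat_eq_weightedLapMatrix [Fintype S] :
    negLapMat H m = weightedLapMatrix (fun s t : Sstar H m => (apWeight H m s.1 t.1 : ℝ)) := by
  ext s t
  by_cases hst : s = t
  · subst hst
    simp [negLapMat, weightedLapMatrix, apWeight_self]
  · simp [negLapMat, weightedLapMatrix, hst]

end RAACH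

lemma lambda2_negLapMat_le_card {S : Type*} [Fintype S] (H : SimpleGraph S) (m : S → ℕ∞)
    {f : Sstar H m → ℝ} (hf0 : f ≠ 0) (hsum : ∑ x, f x = 0)
    (hf : ∀ s t : Sstar H m, t.1 = s.1⁻¹ → orderOf s.1 = 3 → f s = f t) :
    lambda2 (negLapMat_isHermitian H m).eigenvalues ≤ Nat.card (Sstar H m) := by
  rw [Nat.card_eq_fintype_card]
  refine lambda2_le_card_of_eq_weightedLapMatrix _ (negLapMat_eq_weightedLapMatrix H m)
    (fun s t => by rw [apWeight_symm]) hf0 hsum fun s t => ?_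
  rcases apWeight_le_one_or H m s.1 t.1 with hle | ⟨hts, h3⟩
  · exact mul_le_of_le_one_left (sq_nonneg _) (by exact_mod_cast hle)
  · simp [hf s t hts h3]

theorem lambda2_le_D_general {S : Type} [Fintype S] (H : SimpleGraph S) (m : S → ℕ∞)
    (h : ({s : S | m s = 3} = ∅ ∧ 2 ≤ Nat.card (Sstar H m)) ∨
         ({s : S | m s = 3} = Set.univ ∧ 4 ≤ Nat.card (Sstar H m))) :
    lambda2 (negLapMat_isHermitian H m).eigenvalues ≤ (Nat.card (Sstar H m) : ℝ) := by
  rcases h with ⟨hR₃, hD⟩ | ⟨-, hD⟩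
  · have : Nontrivial (Sstar H m) := Finite.one_lt_card_iff_nontrivial.mp hD
    obtain ⟨x, y, hxy⟩ := exists_pair_ne (Sstar H m)
    refine lambda2_negLapMat_le_card H m (f := balancedIndicator {x} {y})
      (balancedIndicator_ne_zero (disjoint_singleton.mpr hxy) (singleton_nonempty x)
        (singleton_nonempty y)) (sum_balancedIndicator _ _) fun s _ _ h3 =>
      absurd h3 <| orderOf_ne_of_mem_Sstar H m three_ne_zero
        (fun u => Set.eq_empty_iff_forall_notMem.mp hR₃ u) s.2
  · obtain ⟨a⟩ : Nonempty (Sstar H m) := Finite.card_pos_iff.mp (by omega)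
    obtain ⟨b, -, hb⟩ := exists_mem_notMem_of_card_lt_card (s := invClass a) (t := univ)
      (by rw [card_univ, ← Nat.card_eq_fintype_card]; linarith [card_invClass_le_two a])
    refine lambda2_negLapMat_le_card H m (f := balancedIndicator (invClass a) (invClass b))
      (balancedIndicator_ne_zero (disjoint_invClass hb) ⟨a, self_mem_invClass a⟩
        ⟨b, self_mem_invClass b⟩) (sum_balancedIndicator _ _) fun s t hts _ => ?_
    simp only [balancedIndicator, mem_invClass_iff_of_eq_inv hts]

/-- **Lemma 4.4:** if `R₃ = ∅` and `D ≥ 2`, or `R₃ = S` and `D ≥ 4`, then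
`λ₂(-Δ_{H*}) ≤ D = |S*|`. -/
theorem lambda2_le_D {S : Type} [Fintype S] (H : SimpleGraph S) (m : S → ℕ∞)
    (hm : ∀ s, m s = 2 ∨ m s = 3 ∨ m s = 4 ∨ m s = (⊤ : ℕ∞))
    (h : ({s : S | m s = 3} = ∅ ∧ 2 ≤ Nat.card (Sstar H m)) ∨
         ({s : S | m s = 3} = Set.univ ∧ 4 ≤ Nat.card (Sstar H m))) :
    lambda2 (negLapMat_isHermitian H m).eigenvalues ≤ (Nat.card (Sstar H m) : ℝ) :=
  lambda2_le_D_general H m h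
end

section
/- Let Φ : V → V' be a surjective 1-Lipschitz map between connected locally finite simple graphs G = (V,E) and G' = (V',E'), and let (m,w) and (m',w') be weighting schemes on G and G' such that (i) m(x) = m'(Φ(x)) for all x ∈ V, and (ii) for all adjacent x', y' ∈ V' and every x ∈ Φ⁻¹(x'), one has w'(x',y') = Σ_{y ∈ Φ⁻¹(y')} w(x,y). Then for every edge {x',y'} ∈ E' and every edge {x,y} ∈ E with Φ(x) = x' and Φ(y) = y', the Lin–Lu–Yau Ollivier Ricci curvatures computed with the respective weighted Laplacians satisfy κ_LLY^{G'}(x',y') ≥ κ_LLY^{G}(x,y). -/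
set_option linter.unusedVariables false

attribute [local instance] Classical.propDecidable

/-- The weighted Laplacian associated to a vertex measure `m` and edge weights `w`. -/
noncomputable def wlap {V : Type*} (m : V → ℝ) (w : V → V → ℝ) (f : V → ℝ) (x : V) : ℝ :=
  (m x)⁻¹ * ∑ᶠ y, w x y * (f y - f x)

/-- The Lin-Lu-Yau Ollivier Ricci curvature of the edge `{x, y}` with respect to the
weighted Laplacian of `(m, w)`, in the limit-free formulation of Münch-Wojciechowski. -/
noncomputable def kappaW {V : Type*} (G : SimpleGraph V) (m : V → ℝ) (w : V → V → ℝ)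
    (x y : V) : ℝ :=
  sInf {r : ℝ | ∃ f : V → ℝ, GLip G f ∧ f y - f x = 1 ∧ r = wlap m w f x - wlap m w f y}

/-!
Pulling a 1-Lipschitz function `f'` on `G'` back along `Φ` gives a 1-Lipschitz function
`f' ∘ Φ` on `G` with the same values at `x, y`. Conditions (i) and (ii) make the Laplacian
commute with this pullback, `Δ (f' ∘ Φ) = (Δ' f') ∘ Φ`: a neighbour of `a` is sent either to
`Φ a`, where it contributes nothing, or to a neighbour `z'` of `Φ a`, and the weights from `a`
into the fibre over `z'` add up to `w' (Φ a) z'`. Hence every value competing for `κ'(Φ x, Φ y)`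
also competes for `κ(x, y)`. The infima compare because the smaller set is nonempty (it contains
the value of a distance function) and the larger one is bounded below (`|Δ f| ≤ |m|⁻¹ ∑ |w|` for
1-Lipschitz `f`).
-/

section

variable {V V' : Type*}

def kappaCandidates (G : SimpleGraph V) (m : V → ℝ) (w : V → V → ℝ) (x y : V) : Set ℝ :=
  {r : ℝ | ∃ f : V → ℝ, GLip G f ∧ f y - f x = 1 ∧ r = wlap m w f x - wlap m w f y}

theorem adj_of_weight_ne_zero {G : SimpleGraph V} {w : V → V → ℝ} (hnonneg : ∀ x y, 0 ≤ w x y)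
    (hpos : ∀ x y, 0 < w x y ↔ G.Adj x y) (x y : V) (h : w x y ≠ 0) : G.Adj x y :=
  (hpos x y).mp ((hnonneg x y).lt_of_ne' h)

theorem GLip.abs_sub_le_one_of_adj {G : SimpleGraph V} {f : V → ℝ} (hf : GLip G f) {u v : V}
    (huv : G.Adj u v) : |f u - f v| ≤ 1 := by
  simpa [SimpleGraph.dist_eq_one_iff_adj.mpr huv] using hf u v

theorem GLip.comp {G : SimpleGraph V} {G' : SimpleGraph V'} {Φ : V → V'}
    (hΦ : ∀ x y, G'.dist (Φ x) (Φ y) ≤ G.dist x y) {f : V' → ℝ} (hf : GLip G' f) :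
    GLip G (f ∘ Φ) :=
  fun u v => (hf (Φ u) (Φ v)).trans (by exact_mod_cast hΦ u v)

theorem SimpleGraph.Connected.gLip_dist {G : SimpleGraph V} (hG : G.Connected) (u : V) :
    GLip G (fun v => (G.dist u v : ℝ)) := by
  intro a b
  have hab : (G.dist u a : ℝ) ≤ G.dist u b + G.dist a b := by
    rw [SimpleGraph.dist_comm (u := a)]; exact_mod_cast hG.dist_triangle
  have hba : (G.dist u b : ℝ) ≤ G.dist u a + G.dist a b := by exact_mod_cast hG.dist_triangle
  rw [abs_sub_le_iff]
  constructor <;> linarith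

theorem kappaCandidates_nonempty {G : SimpleGraph V} (hG : G.Connected) (m : V → ℝ)
    (w : V → V → ℝ) {x y : V} (hxy : G.Adj x y) : (kappaCandidates G m w x y).Nonempty :=
  ⟨_, fun v => (G.dist x v : ℝ), hG.gLip_dist x,
    by simp [SimpleGraph.dist_eq_one_iff_adj.mpr hxy], rfl⟩

theorem map_eq_or_adj_of_adj {G : SimpleGraph V} {G' : SimpleGraph V'} (hG' : G'.Connected)
    {Φ : V → V'} (hΦ : ∀ x y, G'.dist (Φ x) (Φ y) ≤ G.dist x y) {a z : V} (haz : G.Adj a z) :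
    Φ z = Φ a ∨ G'.Adj (Φ a) (Φ z) := by
  have hle : G'.dist (Φ a) (Φ z) ≤ 1 := SimpleGraph.dist_eq_one_iff_adj.mpr haz ▸ hΦ a z
  rcases Nat.le_one_iff_eq_zero_or_eq_one.mp hle with h | h
  · exact .inl (hG'.dist_eq_zero_iff.mp h).symm
  · exact .inr (SimpleGraph.dist_eq_one_iff_adj.mp h)

section LocallyFinite

variable (G : SimpleGraph V) [G.LocallyFinite] {m : V → ℝ} {w : V → V → ℝ}

theorem wlap_eq_sum_neighborFinset (hw : ∀ x y, w x y ≠ 0 → G.Adj x y) (f : V → ℝ) (x : V) :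
    wlap m w f x = (m x)⁻¹ * ∑ z ∈ G.neighborFinset x, w x z * (f z - f x) := by
  refine congrArg _ (finsum_eq_sum_of_support_subset _ fun z hz => ?_)
  simpa using hw x z (left_ne_zero_of_mul hz)

theorem abs_wlap_le (hw : ∀ x y, w x y ≠ 0 → G.Adj x y) {f : V → ℝ} (hf : GLip G f) (x : V) :
    |wlap m w f x| ≤ |m x|⁻¹ * ∑ z ∈ G.neighborFinset x, |w x z| := by
  rw [wlap_eq_sum_neighborFinset G hw, abs_mul, abs_inv]
  gcongr
  refine (Finset.abs_sum_le_sum_abs _ _).trans (Finset.sum_le_sum fun z hz => ?_)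
  rw [abs_mul]
  exact mul_le_of_le_one_right (abs_nonneg _)
    (hf.abs_sub_le_one_of_adj ((G.mem_neighborFinset x z).mp hz).symm)

theorem bddBelow_kappaCandidates (hw : ∀ x y, w x y ≠ 0 → G.Adj x y) (x y : V) :
    BddBelow (kappaCandidates G m w x y) := by
  refine ⟨-(|m x|⁻¹ * ∑ z ∈ G.neighborFinset x, |w x z|
      + |m y|⁻¹ * ∑ z ∈ G.neighborFinset y, |w y z|), ?_⟩
  rintro r ⟨f, hf, -, rfl⟩
  have hx := abs_le.mp (abs_wlap_le G (m := m) hw hf x)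
  have hy := abs_le.mp (abs_wlap_le G (m := m) hw hf y)
  linarith [hx.1, hy.2]

variable {G' : SimpleGraph V'} {Φ : V → V'} {m' : V' → ℝ} {w' : V' → V' → ℝ}

theorem sum_fiber_neighborFinset_eq (hw : ∀ x y, w x y ≠ 0 → G.Adj x y)
    (hww' : ∀ x y', G'.Adj (Φ x) y' → w' (Φ x) y' = ∑ᶠ y ∈ Φ ⁻¹' {y'}, w x y)
    {a : V} {z' : V'} (h : G'.Adj (Φ a) z') :
    ∑ z ∈ (G.neighborFinset a).filter (Φ · = z'), w a z = w' (Φ a) z' := by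
  rw [hww' a z' h]
  refine (finsum_mem_eq_sum_of_inter_support_eq (w a) (Set.ext fun z => ?_)).symm
  simp only [Set.mem_inter_iff, Set.mem_preimage, Set.mem_singleton_iff, Function.mem_support,
    Finset.coe_filter, Set.mem_ofPred_eq, SimpleGraph.mem_neighborFinset]
  exact ⟨fun ⟨hz, hw0⟩ => ⟨⟨hw a z hw0, hz⟩, hw0⟩, fun ⟨⟨_, hz⟩, hw0⟩ => ⟨hz, hw0⟩⟩

theorem wlap_comp [G'.LocallyFinite] (hG' : G'.Connected)
    (hΦ : ∀ x y, G'.dist (Φ x) (Φ y) ≤ G.dist x y)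
    (hw : ∀ x y, w x y ≠ 0 → G.Adj x y) (hw' : ∀ x' y', w' x' y' ≠ 0 → G'.Adj x' y')
    (hmm' : ∀ x, m x = m' (Φ x))
    (hww' : ∀ x y', G'.Adj (Φ x) y' → w' (Φ x) y' = ∑ᶠ y ∈ Φ ⁻¹' {y'}, w x y)
    (f : V' → ℝ) (a : V) : wlap m w (f ∘ Φ) a = wlap m' w' f (Φ a) := by
  rw [wlap_eq_sum_neighborFinset G hw, wlap_eq_sum_neighborFinset G' hw', hmm']
  congr 1
  have hmaps : ∀ z ∈ G.neighborFinset a, Φ z ∈ insert (Φ a) (G'.neighborFinset (Φ a)) :=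
    fun z hz => by
      simpa using map_eq_or_adj_of_adj hG' hΦ ((G.mem_neighborFinset a z).mp hz)
  rw [← Finset.sum_fiberwise_of_maps_to hmaps, Finset.sum_insert (by simp),
    Finset.sum_eq_zero fun z hz => by simp [(Finset.mem_filter.mp hz).2], zero_add]
  refine Finset.sum_congr rfl fun z' hz' => ?_
  rw [← sum_fiber_neighborFinset_eq G hw hww' ((G'.mem_neighborFinset _ _).mp hz'),
    Finset.sum_mul]
  exact Finset.sum_congr rfl fun z hz => by simp [(Finset.mem_filter.mp hz).2]

end LocallyFinite

end

theorem kappa_monotone_under_onelipschitz_general {V V' : Type*} (G : SimpleGraph V) (G' : SimpleGraph V')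
    (hconn' : G'.Connected)
    (hlf : G.LocallyFinite) (hlf' : G'.LocallyFinite)
    (Φ : V → V')
    (hlip : ∀ x y : V, G'.dist (Φ x) (Φ y) ≤ G.dist x y)
    (m : V → ℝ) (w : V → V → ℝ) (m' : V' → ℝ) (w' : V' → V' → ℝ)
    (hwnonneg : ∀ x y, 0 ≤ w x y)
    (hwpos : ∀ x y, 0 < w x y ↔ G.Adj x y)
    (hw'nonneg : ∀ x' y', 0 ≤ w' x' y')
    (hw'pos : ∀ x' y', 0 < w' x' y' ↔ G'.Adj x' y')
    (hmm' : ∀ x, m x = m' (Φ x))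
    (hww' : ∀ x' y', G'.Adj x' y' → ∀ x, Φ x = x' →
      w' x' y' = ∑ᶠ y ∈ (Φ ⁻¹' {y'}), w x y) :
    ∀ x y : V, G.Adj x y → G'.Adj (Φ x) (Φ y) →
      kappaW G m w x y ≤ kappaW G' m' w' (Φ x) (Φ y) := by
  intro x y _ hxy'
  have hw := adj_of_weight_ne_zero hwnonneg hwpos
  have hpull : ∀ (f : V' → ℝ) a, wlap m w (f ∘ Φ) a = wlap m' w' f (Φ a) :=
    wlap_comp G hconn' hlip hw (adj_of_weight_ne_zero hw'nonneg hw'pos) hmm'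
      fun a y' h => hww' _ y' h a rfl
  refine csInf_le_csInf (bddBelow_kappaCandidates G hw x y)
    (kappaCandidates_nonempty hconn' m' w' hxy') ?_
  rintro r ⟨f, hf, hfxy, rfl⟩
  exact ⟨f ∘ Φ, hf.comp hlip, hfxy, by rw [hpull, hpull]⟩

/-- **Theorem 5.3 (Ollivier part):** under a surjective 1-Lipschitz map with compatible
weighting schemes, the weighted Lin-Lu-Yau Ollivier Ricci curvature of corresponding edges
does not decrease. -/
theorem kappa_monotone_under_onelipschitz {V V' : Type*} (G : SimpleGraph V) (G' : SimpleGraph V')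
    (hconn : G.Connected) (hconn' : G'.Connected)
    (hlf : G.LocallyFinite) (hlf' : G'.LocallyFinite)
    (Φ : V → V') (hsurj : Function.Surjective Φ)
    (hlip : ∀ x y : V, G'.dist (Φ x) (Φ y) ≤ G.dist x y)
    (m : V → ℝ) (w : V → V → ℝ) (m' : V' → ℝ) (w' : V' → V' → ℝ)
    (hm : ∀ x, 0 < m x) (hm' : ∀ x', 0 < m' x')
    (hwsymm : ∀ x y, w x y = w y x) (hwnonneg : ∀ x y, 0 ≤ w x y)
    (hwpos : ∀ x y, 0 < w x y ↔ G.Adj x y)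
    (hw'symm : ∀ x' y', w' x' y' = w' y' x') (hw'nonneg : ∀ x' y', 0 ≤ w' x' y')
    (hw'pos : ∀ x' y', 0 < w' x' y' ↔ G'.Adj x' y')
    (hmm' : ∀ x, m x = m' (Φ x))
    (hww' : ∀ x' y', G'.Adj x' y' → ∀ x, Φ x = x' →
      w' x' y' = ∑ᶠ y ∈ (Φ ⁻¹' {y'}), w x y) :
    ∀ x y : V, G.Adj x y → G'.Adj (Φ x) (Φ y) →
      kappaW G m w x y ≤ kappaW G' m' w' (Φ x) (Φ y) :=
  kappa_monotone_under_onelipschitz_general G G' hconn' hlf hlf' Φ hlip m w m' w' hwnonneg hwpos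
    hw'nonneg hw'pos hmm' hww'
end
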